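/- arXiv:2506.18236 — 4 statements merged into one kernel-verified Lean document; each statement's English description precedes it below -/
import Mathlib

section
/- Let n ≥ 1, let κ be a positive integer, and let X = (x_{iν}) and Y = (y_{jν}) be n×κ matrices of indeterminates. For any polynomial P ∈ ℂ[T] in the entries of an n×n matrix T, define P̃(X,Y) = P(X·ᵗY). Then for all 1 ≤ i,j ≤ n, one has Σ_{ν=1}^{κ} ∂²P̃/(∂x_{iν}∂y_{jν}) = (D_{ij}^{(κ)}P)(X·ᵗY), i.e., applying the mixed Laplacian Δ_{ij} = Σ_{ν=1}^{κ} ∂²/(∂x_{iν}∂y_{jν}) to P̃ yields the pullback under (X,Y) ↦ X·ᵗY of D_{ij}^{(κ)}P. -/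
open MvPolynomial

/-- The "mixed Laplacian" `D_{ij}^{(κ)} = κ·∂_{ij} + Σ_{k,l} t_{kl} ∂_{il} ∂_{kj}`
acting on polynomials in the entries of an `n × n` matrix `T`. -/
noncomputable def Dop (n : ℕ) (κ : ℂ) (i j : Fin n)
    (P : MvPolynomial (Fin n × Fin n) ℂ) : MvPolynomial (Fin n × Fin n) ℂ :=
  C κ * pderiv (i, j) P +
    ∑ k : Fin n, ∑ l : Fin n, X (k, l) * pderiv (i, l) (pderiv (k, j) P)

/-- The entries of the matrix `X · ᵗY`, as polynomials in the entries of the `n × κ`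
matrices of indeterminates `X` (indexed by `Sum.inl`) and `Y` (indexed by `Sum.inr`). -/
noncomputable def XtY (n k : ℕ) (p : Fin n × Fin n) :
    MvPolynomial ((Fin n × Fin k) ⊕ (Fin n × Fin k)) ℂ :=
  ∑ ν : Fin k, X (Sum.inl (p.1, ν)) * X (Sum.inr (p.2, ν))

lemma pderiv_aeval_sum {σ τ : Type*} [Fintype σ] [DecidableEq σ] [DecidableEq τ]
    (f : σ → MvPolynomial τ ℂ) (t : τ) (P : MvPolynomial σ ℂ) :
    pderiv t (aeval f P) = ∑ s : σ, aeval f (pderiv s P) * pderiv t (f s) := by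
  induction P using MvPolynomial.induction_on with
  | C a => simp [pderiv_C]
  | add p q hp hq =>
    simp only [map_add, hp, hq, add_mul, Finset.sum_add_distrib]
  | mul_X p s h =>
    simp only [map_mul, aeval_X, pderiv_mul, h, Finset.sum_mul, map_add, pderiv_X, add_mul,
      Finset.sum_add_distrib]
    refine congrArg₂ (· + ·) ?_ ?_
    · exact Finset.sum_congr rfl fun u _ => by ring
    · rw [Finset.sum_eq_single s]
      · simp
      · intro u _ hu; simp [Pi.single_eq_of_ne hu.symm]
      · simp

lemma pderiv_XtY_inr (n k : ℕ) (a b j : Fin n) (ν : Fin k) :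
    pderiv (Sum.inr (j, ν)) (XtY n k (a, b)) =
      if b = j then X (Sum.inl (a, ν)) else 0 := by
  unfold XtY
  rw [map_sum]
  simp only [pderiv_mul, pderiv_X, Pi.single_apply, Sum.inr.injEq, Sum.inl.injEq,
    Prod.mk.injEq, reduceCtorEq, if_false, mul_zero, zero_mul, add_zero, zero_add, mul_ite,
    mul_one, ite_and]
  split_ifs <;> simp

lemma pderiv_XtY_inl (n k : ℕ) (a b i : Fin n) (ν : Fin k) :
    pderiv (Sum.inl (i, ν)) (XtY n k (a, b)) =
      if a = i then X (Sum.inr (b, ν)) else 0 := by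
  unfold XtY
  rw [map_sum]
  simp only [pderiv_mul, pderiv_X, Pi.single_apply, Sum.inr.injEq, Sum.inl.injEq,
    Prod.mk.injEq, reduceCtorEq, if_false, mul_zero, zero_mul, add_zero, zero_add, ite_mul,
    one_mul, ite_and]
  split_ifs <;> simp

/-- for any polynomial `P ∈ ℂ[T]` and `P̃(X,Y) = P(X·ᵗY)`, applying the mixed
Laplacian `Δ_{ij} = Σ_ν ∂²/(∂x_{iν}∂y_{jν})` to `P̃` yields the pullback under
`(X,Y) ↦ X·ᵗY` of `D_{ij}^{(κ)} P`. -/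
theorem stmt0 (n k : ℕ) (hn : 1 ≤ n) (hk : 1 ≤ k)
    (P : MvPolynomial (Fin n × Fin n) ℂ) (i j : Fin n) :
    ∑ ν : Fin k,
        pderiv (Sum.inl (i, ν)) (pderiv (Sum.inr (j, ν)) (aeval (XtY n k) P)) =
      aeval (XtY n k) (Dop n (k : ℂ) i j P) := by
  unfold Dop
  classical
  have key : ∀ ν : Fin k, pderiv (Sum.inr (j, ν)) (aeval (XtY n k) P)
      = ∑ a : Fin n, aeval (XtY n k) (pderiv (a, j) P) * X (Sum.inl (a, ν)) := by
    intro ν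
    rw [pderiv_aeval_sum, Fintype.sum_prod_type]
    refine Finset.sum_congr rfl fun a _ => ?_
    rw [Finset.sum_eq_single j]
    · rw [pderiv_XtY_inr]; simp
    · intro b _ hb; rw [pderiv_XtY_inr]; simp [hb]
    · simp
  have key2 : ∀ (ν : Fin k) (Q : MvPolynomial (Fin n × Fin n) ℂ),
      pderiv (Sum.inl (i, ν)) (aeval (XtY n k) Q)
      = ∑ c : Fin n, aeval (XtY n k) (pderiv (i, c) Q) * X (Sum.inr (c, ν)) := by
    intro ν Q
    rw [pderiv_aeval_sum, Fintype.sum_prod_type]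
    rw [Finset.sum_eq_single i]
    · refine Finset.sum_congr rfl fun c _ => ?_
      rw [pderiv_XtY_inl]; simp
    · intro b _ hb
      refine Finset.sum_eq_zero fun c _ => ?_
      rw [pderiv_XtY_inl]; simp [hb]
    · simp
  have L1 : ∀ ν : Fin k,
      pderiv (Sum.inl (i, ν)) (pderiv (Sum.inr (j, ν)) (aeval (XtY n k) P))
      = (∑ a : Fin n, ∑ c : Fin n, aeval (XtY n k) (pderiv (i, c) (pderiv (a, j) P)) *
          (X (Sum.inl (a, ν)) * X (Sum.inr (c, ν))))
        + aeval (XtY n k) (pderiv (i, j) P) := by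
    intro ν
    rw [key ν, map_sum]
    have inner : ∀ a : Fin n,
        pderiv (Sum.inl (i, ν)) (aeval (XtY n k) (pderiv (a, j) P) * X (Sum.inl (a, ν)))
        = (∑ c : Fin n, aeval (XtY n k) (pderiv (i, c) (pderiv (a, j) P)) *
            (X (Sum.inl (a, ν)) * X (Sum.inr (c, ν))))
          + aeval (XtY n k) (pderiv (a, j) P) * (if a = i then 1 else 0) := by
      intro a
      rw [pderiv_mul, key2 ν]
      congr 1
      · rw [Finset.sum_mul]
        refine Finset.sum_congr rfl fun c _ => ?_
        ring
      · congr 1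
        rw [pderiv_X, Pi.single_apply]
        simp [Prod.ext_iff, eq_comm]
    simp only [inner]
    rw [Finset.sum_add_distrib]
    congr 1
    rw [Finset.sum_eq_single i] <;> simp +contextual
  simp only [L1]
  rw [Finset.sum_add_distrib, map_add, map_mul, aeval_C, map_sum, Finset.sum_const,
    Finset.card_univ, Fintype.card_fin]
  conv_rhs => rw [add_comm]
  congr 1
  · rw [Finset.sum_comm]
    refine Finset.sum_congr rfl fun a _ => ?_
    rw [map_sum, Finset.sum_comm]
    refine Finset.sum_congr rfl fun c _ => ?_
    rw [map_mul, aeval_X]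
    unfold XtY
    rw [Finset.sum_mul]
    exact Finset.sum_congr rfl fun ν _ => by ring
  · simp [nsmul_eq_mul, algebraMap_eq]
end

section
/- Let 𝐚,𝐛 ∈ ℤ_{≥0}^n and set Ξ_{𝐚,𝐛} = ℤ ∩ ⋃_{i=1}^n [2−(a_i+b_i), 1−max{a_i,b_i}]. If κ ∈ ℂ∖Ξ_{𝐚,𝐛}, then the linear map Φ : 𝒫_{𝐚,𝐛}(κ) → ℂ^{𝒩₀(𝐚,𝐛)}, sending a polynomial P to the family of its coefficients at the monomials T^ν for ν ∈ 𝒩₀(𝐚,𝐛), is an isomorphism of complex vector spaces. In particular, dim 𝒫_{𝐚,𝐛}(κ) = |𝒩₀(𝐚,𝐛)|. -/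
open MvPolynomial

/-- `P ∈ ℂ[T]_{𝐚,𝐛}`: every monomial of `P` has row sums `𝐚` and column sums `𝐛`. -/
def inPab (n : ℕ) (a b : Fin n → ℕ) (P : MvPolynomial (Fin n × Fin n) ℂ) : Prop :=
  ∀ d ∈ P.support,
    (∀ i : Fin n, ∑ j : Fin n, d (i, j) = a i) ∧
    (∀ j : Fin n, ∑ i : Fin n, d (i, j) = b j)

namespace Stmt4

variable {n : ℕ}

abbrev M (n : ℕ) := (Fin n × Fin n) →₀ ℕ

noncomputable abbrev ee (p : Fin n × Fin n) : M n := Finsupp.single p 1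

lemma coeff_pderiv (p : Fin n × Fin n) (f : MvPolynomial (Fin n × Fin n) ℂ) (μ : M n) :
    coeff μ (pderiv p f) = ((μ p : ℂ) + 1) * coeff (μ + ee p) f := by
  induction f using MvPolynomial.induction_on' with
  | monomial s c =>
    rw [pderiv_monomial, coeff_monomial, coeff_monomial]
    by_cases hs : s p = 0
    · have h1 : s - Finsupp.single p 1 = s := by
        ext q
        rw [Finsupp.tsub_apply]
        rcases eq_or_ne q p with rfl | hq
        · simp [hs]
        · simp [Finsupp.single_apply, Ne.symm hq]
      have h2 : s ≠ μ + ee p := by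
        intro h
        apply absurd hs
        rw [h]
        simp [ee]
      rw [h1, if_neg h2]
      split
      · simp [hs]
      · ring
    · have hle : Finsupp.single p 1 ≤ s := by
        rw [Finsupp.single_le_iff]
        omega
      have h3 : (s - Finsupp.single p 1 = μ) ↔ (s = μ + ee p) := by
        constructor
        · intro h
          rw [← h, ee, tsub_add_cancel_of_le hle]
        · intro h
          rw [h, ee]
          simp
      by_cases h : s = μ + ee p
      · rw [if_pos (h3.mpr h), if_pos h, h]
        push_cast [ee]
        ring_nf
        simp [Finsupp.single_apply]
        ring
      · rw [if_neg (fun hh => h (h3.mp hh)), if_neg h, mul_zero]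
  | add f g hf hg =>
    simp [map_add, coeff_add, hf, hg]
    ring

noncomputable def Eterm (i : Fin n) (c : M n → ℂ) (μ : M n) (k l : Fin n) : ℂ :=
  if μ (k, l) = 0 then 0 else
    (((μ - ee (k, l)) (i, l) : ℂ) + 1) * (((μ - ee (k, l) + ee (i, l)) (k, i) : ℂ) + 1) *
      c (μ - ee (k, l) + ee (i, l) + ee (k, i))

noncomputable def Efun (κ : ℂ) (i : Fin n) (c : M n → ℂ) (μ : M n) : ℂ :=
  κ * ((μ (i, i) : ℂ) + 1) * c (μ + ee (i, i)) + ∑ k : Fin n, ∑ l : Fin n, Eterm i c μ k l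

lemma coeff_Dop (κ : ℂ) (i : Fin n) (P : MvPolynomial (Fin n × Fin n) ℂ) (μ : M n) :
    coeff μ (Dop n κ i i P) = Efun κ i (fun ν => coeff ν P) μ := by
  rw [Dop, Efun, coeff_add, coeff_C_mul, coeff_pderiv]
  congr 1
  · ring
  · rw [coeff_sum]
    refine Finset.sum_congr rfl fun k _ => ?_
    rw [coeff_sum]
    refine Finset.sum_congr rfl fun l _ => ?_
    rw [coeff_X_mul', Eterm]
    by_cases h : μ (k, l) = 0
    · rw [if_neg (by simp [h]), if_pos h]
    · rw [if_pos (by simp [h]), if_neg h, coeff_pderiv, coeff_pderiv]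
      ring

lemma Dop_sub (κ : ℂ) (i j : Fin n) (P Q : MvPolynomial (Fin n × Fin n) ℂ) :
    Dop n κ i j (P - Q) = Dop n κ i j P - Dop n κ i j Q := by
  simp only [Dop, map_sub, mul_sub, Finset.sum_sub_distrib]
  ring

lemma eterm_row (i : Fin n) (c : M n → ℂ) (μ : M n) (l : Fin n) :
    Eterm i c μ i l = (μ (i, l) : ℂ) * ((μ (i, i) : ℂ) + 1) * c (μ + ee (i, i)) := by
  rw [Eterm]
  by_cases h : μ (i, l) = 0
  · rw [if_pos h, h]; simp
  · rw [if_neg h]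
    have hle : ee (i, l) ≤ μ := Finsupp.single_le_iff.2 (by omega)
    have h1 : μ - ee (i, l) + ee (i, l) = μ := tsub_add_cancel_of_le hle
    have h2 : ((μ - ee (i, l)) (i, l) : ℂ) + 1 = (μ (i, l) : ℂ) := by
      rw [Finsupp.tsub_apply]
      have : (μ (i, l) - ee (i, l) (i, l) : ℕ) + 1 = μ (i, l) := by
        simp only [Finsupp.single_eq_same]; omega
      exact_mod_cast congrArg (Nat.cast : ℕ → ℂ) this
    rw [h1, h2]

lemma eterm_col (i : Fin n) (c : M n → ℂ) (μ : M n) (k : Fin n) :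
    Eterm i c μ k i = (μ (k, i) : ℂ) * ((μ (i, i) : ℂ) + 1) * c (μ + ee (i, i)) := by
  rcases eq_or_ne k i with rfl | hk
  · exact eterm_row _ c μ _
  rw [Eterm]
  by_cases h : μ (k, i) = 0
  · rw [if_pos h, h]; simp
  · rw [if_neg h]
    have hle : ee (k, i) ≤ μ := Finsupp.single_le_iff.2 (by omega)
    have h1 : μ - ee (k, i) + ee (k, i) = μ := tsub_add_cancel_of_le hle
    have hne : ((k, i) : Fin n × Fin n) ≠ (i, i) := by simp [hk]
    have hne2 : ((i, i) : Fin n × Fin n) ≠ (k, i) := Ne.symm hne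
    have h2 : ((μ - ee (k, i)) (i, i) : ℂ) = (μ (i, i) : ℂ) := by
      rw [Finsupp.tsub_apply, Finsupp.single_eq_of_ne' hne]; simp
    have h3 : ((μ - ee (k, i) + ee (i, i)) (k, i) : ℂ) + 1 = (μ (k, i) : ℂ) := by
      rw [Finsupp.add_apply, Finsupp.tsub_apply, Finsupp.single_eq_of_ne' hne2,
        Finsupp.single_eq_same]
      have : (μ (k, i) - 1 + 0 : ℕ) + 1 = μ (k, i) := by omega
      exact_mod_cast congrArg (Nat.cast : ℕ → ℂ) this
    have h4 : μ - ee (k, i) + ee (i, i) + ee (k, i) = μ + ee (i, i) := by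
      rw [add_right_comm, h1]
    rw [h2, h3, h4]
    ring

lemma key (κ : ℂ) (i : Fin n) (c : M n → ℂ) (μ : M n) :
    Efun κ i c μ
      = ((μ (i, i) : ℂ) + 1) *
          (κ + (∑ l : Fin n, (μ (i, l) : ℂ)) + ∑ k ∈ Finset.univ.erase i, (μ (k, i) : ℂ)) *
          c (μ + ee (i, i))
        + ∑ k : Fin n, ∑ l : Fin n, (if k = i ∨ l = i then 0 else Eterm i c μ k l) := by
  rw [Efun]
  have hsplit : ∀ k l : Fin n, Eterm i c μ k l
      = (if k = i ∨ l = i then Eterm i c μ k l else 0)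
        + (if k = i ∨ l = i then 0 else Eterm i c μ k l) := by
    intro k l; split <;> ring
  have h2 : ∑ k : Fin n, ∑ l : Fin n, (if k = i ∨ l = i then Eterm i c μ k l else 0)
      = ((∑ l : Fin n, (μ (i, l) : ℂ)) + ∑ k ∈ Finset.univ.erase i, (μ (k, i) : ℂ)) *
          (((μ (i, i) : ℂ) + 1) * c (μ + ee (i, i))) := by
    rw [← Finset.add_sum_erase _ _ (Finset.mem_univ i)]
    have hi : ∑ l : Fin n, (if i = i ∨ l = i then Eterm i c μ i l else 0)
        = (∑ l : Fin n, (μ (i, l) : ℂ)) * (((μ (i, i) : ℂ) + 1) * c (μ + ee (i, i))) := by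
      rw [Finset.sum_mul]
      refine Finset.sum_congr rfl fun l _ => ?_
      rw [if_pos (Or.inl rfl), eterm_row]
      ring
    have hk : ∀ k ∈ Finset.univ.erase i,
        (∑ l : Fin n, (if k = i ∨ l = i then Eterm i c μ k l else 0))
          = (μ (k, i) : ℂ) * (((μ (i, i) : ℂ) + 1) * c (μ + ee (i, i))) := by
      intro k hkmem
      have hkne : k ≠ i := (Finset.mem_erase.1 hkmem).1
      have : ∀ l : Fin n, (if k = i ∨ l = i then Eterm i c μ k l else 0)
          = (if l = i then Eterm i c μ k l else 0) := by
        intro l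
        by_cases hl : l = i
        · rw [if_pos (Or.inr hl), if_pos hl]
        · rw [if_neg (by tauto), if_neg hl]
      rw [Finset.sum_congr rfl fun l _ => this l, Finset.sum_ite_eq' Finset.univ i,
        if_pos (Finset.mem_univ i), eterm_col]
      ring
    rw [hi, Finset.sum_congr rfl hk, ← Finset.sum_mul]; ring
  calc κ * ((μ (i, i) : ℂ) + 1) * c (μ + ee (i, i))
        + ∑ k : Fin n, ∑ l : Fin n, Eterm i c μ k l
      = κ * ((μ (i, i) : ℂ) + 1) * c (μ + ee (i, i))
        + ((∑ k : Fin n, ∑ l : Fin n, (if k = i ∨ l = i then Eterm i c μ k l else 0))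
          + ∑ k : Fin n, ∑ l : Fin n, (if k = i ∨ l = i then 0 else Eterm i c μ k l)) := by
        rw [← Finset.sum_add_distrib]
        simp_rw [← Finset.sum_add_distrib]
        congr 1
        exact Finset.sum_congr rfl fun k _ => Finset.sum_congr rfl fun l _ => hsplit k l
    _ = _ := by rw [h2]; ring

def rowS (μ : M n) (i : Fin n) : ℕ := ∑ j : Fin n, μ (i, j)
def colS (μ : M n) (j : Fin n) : ℕ := ∑ i : Fin n, μ (i, j)

def good (a b : Fin n → ℕ) (ν : M n) : Prop :=
  (∀ i, rowS ν i = a i) ∧ (∀ j, colS ν j = b j)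

instance (a b : Fin n → ℕ) : DecidablePred (good a b) := fun ν => by
  unfold good; infer_instance

lemma rowS_add (x y : M n) (i : Fin n) : rowS (x + y) i = rowS x i + rowS y i := by
  simp [rowS, Finset.sum_add_distrib]

lemma colS_add (x y : M n) (i : Fin n) : colS (x + y) i = colS x i + colS y i := by
  simp [colS, Finset.sum_add_distrib]

lemma rowS_ee (p : Fin n × Fin n) (i : Fin n) :
    rowS (ee p) i = if p.1 = i then 1 else 0 := by
  obtain ⟨pa, pb⟩ := p
  simp only [rowS, ee, Finsupp.single_apply, Prod.mk.injEq, ite_and]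
  by_cases h : pa = i
  · simp [h, Finset.sum_ite_eq]
  · simp [h]

lemma colS_ee (p : Fin n × Fin n) (j : Fin n) :
    colS (ee p) j = if p.2 = j then 1 else 0 := by
  obtain ⟨pa, pb⟩ := p
  simp only [colS, ee, Finsupp.single_apply, Prod.mk.injEq, ite_and]
  by_cases h : pb = j
  · subst h
    rw [Finset.sum_congr rfl (fun k _ => ?_), Finset.sum_ite_eq Finset.univ pa fun _ => 1]
    · simp
    · simp
  · simp [h]

def w (ν : M n) : ℕ := ∑ i : Fin n, ν (i, i)

lemma w_eq_zero_iff (ν : M n) : w ν = 0 ↔ ∀ i, ν (i, i) = 0 := by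
  rw [w, Finset.sum_eq_zero_iff]
  simp

lemma w_add_ee_off (x : M n) (p : Fin n × Fin n) (h : p.1 ≠ p.2) :
    w (x + ee p) = w x := by
  rw [w, w]
  have : ∀ i : Fin n, (x + ee p) (i, i) = x (i, i) := by
    intro i
    rw [Finsupp.add_apply, Finsupp.single_apply, if_neg (by
      intro hh
      apply h
      rw [hh]), add_zero]
  exact Finset.sum_congr rfl fun i _ => this i

lemma w_tsub_le (x y : M n) : w (x - y) ≤ w x := by
  apply Finset.sum_le_sum
  intro i _
  rw [Finsupp.tsub_apply]
  omega

lemma w_tsub_ee_lt (ν : M n) (i : Fin n) (hi : ν (i, i) ≠ 0) :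
    w (ν - ee (i, i)) < w ν := by
  apply Finset.sum_lt_sum
  · intro m _
    rw [Finsupp.tsub_apply]
    omega
  · exact ⟨i, Finset.mem_univ i, by
      rw [Finsupp.tsub_apply, Finsupp.single_eq_same]
      omega⟩

lemma w_target_lt (ν : M n) (i k l : Fin n) (hi : ν (i, i) ≠ 0) (hk : k ≠ i) (hl : l ≠ i) :
    w (ν - ee (i, i) - ee (k, l) + ee (i, l) + ee (k, i)) < w ν := by
  rw [w_add_ee_off _ (k, i) hk, w_add_ee_off _ (i, l) (Ne.symm hl)]
  exact lt_of_le_of_lt (w_tsub_le _ _) (w_tsub_ee_lt ν i hi)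

def minIdx (ν : M n) (h : ¬ ∀ i, ν (i, i) = 0) : Fin n :=
  (Finset.univ.filter fun i => ν (i, i) ≠ 0).min' (by
    push_neg at h
    obtain ⟨i, hi⟩ := h
    exact ⟨i, Finset.mem_filter.2 ⟨Finset.mem_univ i, hi⟩⟩)

lemma minIdx_spec (ν : M n) (h : ¬ ∀ i, ν (i, i) = 0) :
    ν (minIdx ν h, minIdx ν h) ≠ 0 := by
  have h' : (Finset.univ.filter fun i => ν (i, i) ≠ 0).Nonempty := by
    push_neg at h
    obtain ⟨i, hi⟩ := h
    exact ⟨i, Finset.mem_filter.2 ⟨Finset.mem_univ i, hi⟩⟩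
  have := Finset.min'_mem (Finset.univ.filter fun i => ν (i, i) ≠ 0) h'
  exact (Finset.mem_filter.1 this).2

lemma minIdx_min (ν : M n) (h : ¬ ∀ i, ν (i, i) = 0) (j : Fin n) (hj : j < minIdx ν h) :
    ν (j, j) = 0 := by
  by_contra hne
  exact absurd (Finset.min'_le _ j (Finset.mem_filter.2 ⟨Finset.mem_univ j, hne⟩))
    (not_le.2 hj)

lemma minIdx_eq (ν : M n) (h : ¬ ∀ i, ν (i, i) = 0) (i : Fin n)
    (hi : ν (i, i) ≠ 0) (hmin : ∀ j, j < i → ν (j, j) = 0) : minIdx ν h = i := by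
  apply le_antisymm
  · exact Finset.min'_le _ i (Finset.mem_filter.2 ⟨Finset.mem_univ i, hi⟩)
  · apply Finset.le_min'
    intro y hy
    by_contra hlt
    exact (Finset.mem_filter.1 hy).2 (hmin y (not_le.1 hlt))

noncomputable def lamC (κ : ℂ) (i : Fin n) (μ : M n) : ℂ :=
  ((μ (i, i) : ℂ) + 1) *
    (κ + (∑ l : Fin n, (μ (i, l) : ℂ)) + ∑ k ∈ Finset.univ.erase i, (μ (k, i) : ℂ))


noncomputable def Soff (i : Fin n) (c : M n → ℂ) (μ : M n) : ℂ :=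
  ∑ k : Fin n, ∑ l : Fin n, (if k = i ∨ l = i then 0 else Eterm i c μ k l)

lemma key' (κ : ℂ) (i : Fin n) (c : M n → ℂ) (μ : M n) :
    Efun κ i c μ = lamC κ i μ * c (μ + ee (i, i)) + Soff i c μ := by
  rw [key, lamC, Soff]

lemma lam_ne (a b : Fin n → ℕ) (κ : ℂ)
    (hκ : ¬∃ m : ℤ, κ = (m : ℂ) ∧ ∃ i : Fin n,
      2 - ((a i : ℤ) + (b i : ℤ)) ≤ m ∧ m ≤ 1 - (max (a i) (b i) : ℤ))
    (i : Fin n) (μ : M n)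
    (hrow : rowS (μ + ee (i, i)) i = a i) (hcol : colS (μ + ee (i, i)) i = b i) :
    lamC κ i μ ≠ 0 := by
  have hr : rowS μ i + 1 = a i := by
    rw [rowS_add, rowS_ee] at hrow
    simpa using hrow
  have hc : colS μ i + 1 = b i := by
    rw [colS_add, colS_ee] at hcol
    simpa using hcol
  set s : ℕ := ∑ k ∈ Finset.univ.erase i, μ (k, i) with hs
  have hsplit : colS μ i = μ (i, i) + s := by
    rw [colS, ← Finset.add_sum_erase _ _ (Finset.mem_univ i)]
  have hμr : μ (i, i) ≤ rowS μ i :=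
    Finset.single_le_sum (f := fun j => μ (i, j)) (fun _ _ => Nat.zero_le _)
      (Finset.mem_univ i)
  rw [lamC]
  apply mul_ne_zero
  · have h1 : ((μ (i, i) + 1 : ℕ) : ℂ) ≠ 0 := Nat.cast_ne_zero.2 (Nat.succ_ne_zero _)
    push_cast at h1
    exact h1
  · intro hzero
    apply hκ
    have hcast1 : (∑ l : Fin n, (μ (i, l) : ℂ)) = ((rowS μ i : ℕ) : ℂ) := by
      rw [rowS]; push_cast; ring
    have hcast2 : (∑ k ∈ Finset.univ.erase i, (μ (k, i) : ℂ)) = ((s : ℕ) : ℂ) := by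
      rw [hs]; push_cast; ring
    refine ⟨-((rowS μ i : ℤ) + (s : ℤ)), ?_, i, ?_, ?_⟩
    · rw [hcast1, hcast2] at hzero
      push_cast
      linear_combination hzero
    · have h1 : (a i : ℤ) = rowS μ i + 1 := by exact_mod_cast congrArg (Nat.cast : ℕ → ℤ) hr.symm
      have h2 : (b i : ℤ) = μ (i, i) + s + 1 := by
        have : μ (i, i) + s + 1 = b i := by omega
        exact_mod_cast congrArg (Nat.cast : ℕ → ℤ) this.symm
      omega
    · have h1 : (a i : ℤ) = rowS μ i + 1 := by exact_mod_cast congrArg (Nat.cast : ℕ → ℤ) hr.symm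
      have h2 : (b i : ℤ) = μ (i, i) + s + 1 := by
        have : μ (i, i) + s + 1 = b i := by omega
        exact_mod_cast congrArg (Nat.cast : ℕ → ℤ) this.symm
      have h3 : (μ (i, i) : ℤ) ≤ (rowS μ i : ℤ) := by exact_mod_cast hμr
      have hmax : ((max (a i) (b i) : ℕ) : ℤ) ≤ 1 + ((rowS μ i : ℤ) + (s : ℤ)) := by
        rw [Nat.cast_max]
        apply max_le <;> omega
      omega

noncomputable def solveC (a b : Fin n → ℕ) (κ : ℂ) (d : M n → ℂ) (ν : M n) : ℂ :=
  if h0 : ∀ i, ν (i, i) = 0 then (if good a b ν then d ν else 0)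
  else
    -(lamC κ (minIdx ν h0) (ν - ee (minIdx ν h0, minIdx ν h0)))⁻¹ *
      ∑ q ∈ (Finset.univ : Finset (Fin n × Fin n)).attach,
        if hg : q.1.1 ≠ minIdx ν h0 ∧ q.1.2 ≠ minIdx ν h0 ∧
            (ν - ee (minIdx ν h0, minIdx ν h0)) q.1 ≠ 0 then
          (((ν - ee (minIdx ν h0, minIdx ν h0) - ee q.1) (minIdx ν h0, q.1.2) : ℂ) + 1) *
          (((ν - ee (minIdx ν h0, minIdx ν h0) - ee q.1 + ee (minIdx ν h0, q.1.2))
              (q.1.1, minIdx ν h0) : ℂ) + 1) *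
          solveC a b κ d (ν - ee (minIdx ν h0, minIdx ν h0) - ee q.1
            + ee (minIdx ν h0, q.1.2) + ee (q.1.1, minIdx ν h0))
        else 0
termination_by w ν
decreasing_by
  exact w_target_lt ν (minIdx ν h0) q.1.1 q.1.2 (minIdx_spec ν h0) hg.1 hg.2.1

lemma solveC_diag (a b : Fin n → ℕ) (κ : ℂ) (d : M n → ℂ) (ν : M n)
    (h0 : ∀ i, ν (i, i) = 0) :
    solveC a b κ d ν = if good a b ν then d ν else 0 := by
  rw [solveC, dif_pos h0]

lemma solveC_pos (a b : Fin n → ℕ) (κ : ℂ) (d : M n → ℂ) (ν : M n)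
    (h0 : ¬ ∀ i, ν (i, i) = 0) :
    solveC a b κ d ν = -(lamC κ (minIdx ν h0) (ν - ee (minIdx ν h0, minIdx ν h0)))⁻¹ *
      Soff (minIdx ν h0) (solveC a b κ d) (ν - ee (minIdx ν h0, minIdx ν h0)) := by
  rw [solveC, dif_neg h0]
  congr 1
  rw [Soff]
  rw [Finset.sum_attach Finset.univ fun p =>
    if hg : p.1 ≠ minIdx ν h0 ∧ p.2 ≠ minIdx ν h0 ∧
        (ν - ee (minIdx ν h0, minIdx ν h0)) p ≠ 0 then
      (((ν - ee (minIdx ν h0, minIdx ν h0) - ee p) (minIdx ν h0, p.2) : ℂ) + 1) *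
      (((ν - ee (minIdx ν h0, minIdx ν h0) - ee p + ee (minIdx ν h0, p.2))
          (p.1, minIdx ν h0) : ℂ) + 1) *
      solveC a b κ d (ν - ee (minIdx ν h0, minIdx ν h0) - ee p
        + ee (minIdx ν h0, p.2) + ee (p.1, minIdx ν h0))
    else 0]
  rw [Fintype.sum_prod_type]
  refine Finset.sum_congr rfl fun k _ => Finset.sum_congr rfl fun l _ => ?_
  set i := minIdx ν h0
  set μ := ν - ee (i, i)
  by_cases hk : k = i
  · rw [if_pos (Or.inl hk), dif_neg (by tauto)]
  by_cases hl : l = i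
  · rw [if_pos (Or.inr hl), dif_neg (by tauto)]
  rw [if_neg (by tauto), Eterm]
  by_cases hkl : μ (k, l) = 0
  · rw [if_pos hkl, dif_neg (by tauto)]
  · rw [if_neg hkl, dif_pos ⟨hk, hl, hkl⟩]

lemma rowS_target (μ : M n) (i k l m : Fin n) (hkl : μ (k, l) ≠ 0) :
    rowS (μ - ee (k, l) + ee (i, l) + ee (k, i)) m
      = rowS μ m + (if i = m then 1 else 0) := by
  have heq : μ - ee (k, l) + ee (i, l) + ee (k, i) + ee (k, l)
      = μ + ee (i, l) + ee (k, i) := by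
    ext p
    have hle : ee (k, l) p ≤ μ p := by
      rcases eq_or_ne p (k, l) with rfl | hp
      · simp only [Finsupp.single_eq_same]; omega
      · rw [Finsupp.single_eq_of_ne' (Ne.symm hp)]; omega
    simp only [Finsupp.add_apply, Finsupp.tsub_apply]
    omega
  have hc2 : μ - ee (k, l) + ee (k, l) = μ := by
    ext p
    have hle : ee (k, l) p ≤ μ p := by
      rcases eq_or_ne p (k, l) with rfl | hp
      · simp only [Finsupp.single_eq_same]; omega
      · rw [Finsupp.single_eq_of_ne' (Ne.symm hp)]; omega
    simp only [Finsupp.add_apply, Finsupp.tsub_apply]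
    omega
  have hA := congrArg (fun x => rowS x m) hc2
  simp only [rowS_add, rowS_ee] at hA
  rw [rowS_add, rowS_add, rowS_ee, rowS_ee]
  simp only at hA ⊢
  split_ifs at hA ⊢ <;> omega

lemma colS_target (μ : M n) (i k l m : Fin n) (hkl : μ (k, l) ≠ 0) :
    colS (μ - ee (k, l) + ee (i, l) + ee (k, i)) m
      = colS μ m + (if i = m then 1 else 0) := by
  have heq : μ - ee (k, l) + ee (i, l) + ee (k, i) + ee (k, l)
      = μ + ee (i, l) + ee (k, i) := by
    ext p
    have hle : ee (k, l) p ≤ μ p := by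
      rcases eq_or_ne p (k, l) with rfl | hp
      · simp only [Finsupp.single_eq_same]; omega
      · rw [Finsupp.single_eq_of_ne' (Ne.symm hp)]; omega
    simp only [Finsupp.add_apply, Finsupp.tsub_apply]
    omega
  have hc2 : μ - ee (k, l) + ee (k, l) = μ := by
    ext p
    have hle : ee (k, l) p ≤ μ p := by
      rcases eq_or_ne p (k, l) with rfl | hp
      · simp only [Finsupp.single_eq_same]; omega
      · rw [Finsupp.single_eq_of_ne' (Ne.symm hp)]; omega
    simp only [Finsupp.add_apply, Finsupp.tsub_apply]
    omega
  have hA := congrArg (fun x => colS x m) hc2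
  simp only [colS_add, colS_ee] at hA
  rw [colS_add, colS_add, colS_ee, colS_ee]
  simp only at hA ⊢
  split_ifs at hA ⊢ <;> omega

lemma good_target_iff (a b : Fin n → ℕ) (μ : M n) (i k l : Fin n) (hkl : μ (k, l) ≠ 0) :
    good a b (μ - ee (k, l) + ee (i, l) + ee (k, i)) ↔ good a b (μ + ee (i, i)) := by
  have hr : ∀ m, rowS (μ - ee (k, l) + ee (i, l) + ee (k, i)) m
      = rowS (μ + ee (i, i)) m := by
    intro m
    rw [rowS_target μ i k l m hkl, rowS_add, rowS_ee]
  have hc : ∀ m, colS (μ - ee (k, l) + ee (i, l) + ee (k, i)) m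
      = colS (μ + ee (i, i)) m := by
    intro m
    rw [colS_target μ i k l m hkl, colS_add, colS_ee]
  constructor <;> rintro ⟨h1, h2⟩
  · exact ⟨fun m => by rw [← hr m]; exact h1 m, fun m => by rw [← hc m]; exact h2 m⟩
  · exact ⟨fun m => by rw [hr m]; exact h1 m, fun m => by rw [hc m]; exact h2 m⟩

lemma solveC_not_good (a b : Fin n → ℕ) (κ : ℂ) (d : M n → ℂ) :
    ∀ ν : M n, ¬ good a b ν → solveC a b κ d ν = 0 := by
  suffices H : ∀ m : ℕ, ∀ ν : M n, w ν ≤ m → ¬ good a b ν → solveC a b κ d ν = 0 by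
    exact fun ν h => H (w ν) ν le_rfl h
  intro m
  induction m with
  | zero =>
    intro ν hw hg
    rw [solveC_diag a b κ d ν ((w_eq_zero_iff ν).1 (Nat.le_zero.1 hw)), if_neg hg]
  | succ m ih =>
    intro ν hw hg
    by_cases h0 : ∀ i, ν (i, i) = 0
    · rw [solveC_diag a b κ d ν h0, if_neg hg]
    · rw [solveC_pos a b κ d ν h0]
      set i := minIdx ν h0 with hi
      have hii : ν (i, i) ≠ 0 := minIdx_spec ν h0
      have hν : ν - ee (i, i) + ee (i, i) = ν :=
        tsub_add_cancel_of_le (Finsupp.single_le_iff.2 (by omega))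
      have : Soff i (solveC a b κ d) (ν - ee (i, i)) = 0 := by
        rw [Soff]
        apply Finset.sum_eq_zero
        intro k _
        apply Finset.sum_eq_zero
        intro l _
        by_cases hc : k = i ∨ l = i
        · rw [if_pos hc]
        rw [if_neg hc, Eterm]
        push_neg at hc
        by_cases hkl : (ν - ee (i, i)) (k, l) = 0
        · rw [if_pos hkl]
        rw [if_neg hkl]
        have hzero : solveC a b κ d
            (ν - ee (i, i) - ee (k, l) + ee (i, l) + ee (k, i)) = 0 := by
          apply ih
          · have := w_target_lt ν i k l hii hc.1 hc.2
            omega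
          · intro hgood
            apply hg
            have := (good_target_iff a b (ν - ee (i, i)) i k l hkl).1 hgood
            rwa [hν] at this
        rw [hzero, mul_zero]
      rw [this, mul_zero]

lemma solveC_Efun (a b : Fin n → ℕ) (κ : ℂ)
    (hκ : ¬∃ m : ℤ, κ = (m : ℂ) ∧ ∃ i : Fin n,
      2 - ((a i : ℤ) + (b i : ℤ)) ≤ m ∧ m ≤ 1 - (max (a i) (b i) : ℤ))
    (d : M n → ℂ) (i : Fin n) (μ : M n) (hdiag : ∀ j, j < i → μ (j, j) = 0) :
    Efun κ i (solveC a b κ d) μ = 0 := by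
  have hνi : (μ + ee (i, i)) (i, i) ≠ 0 := by
    rw [Finsupp.add_apply, Finsupp.single_eq_same]
    omega
  have h0 : ¬ ∀ j, (μ + ee (i, i)) (j, j) = 0 := fun h => hνi (h i)
  have hmin : minIdx (μ + ee (i, i)) h0 = i := by
    apply minIdx_eq
    · exact hνi
    · intro j hj
      have hne : ((i, i) : Fin n × Fin n) ≠ (j, j) := by
        intro h
        rw [Prod.mk.injEq] at h
        exact absurd hj (by rw [h.1]; exact lt_irrefl j)
      rw [Finsupp.add_apply, Finsupp.single_eq_of_ne' hne, add_zero]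
      exact hdiag j hj
  have hμ : μ + ee (i, i) - ee (i, i) = μ := add_tsub_cancel_right μ (ee (i, i))
  have hs := solveC_pos a b κ d (μ + ee (i, i)) h0
  rw [hmin, hμ] at hs
  rw [key']
  by_cases hgood : good a b (μ + ee (i, i))
  · have hlam : lamC κ i μ ≠ 0 := lam_ne a b κ hκ i μ (hgood.1 i) (hgood.2 i)
    rw [hs]
    field_simp
    ring
  · have hZ : solveC a b κ d (μ + ee (i, i)) = 0 :=
      solveC_not_good a b κ d _ hgood
    have hSoff : Soff i (solveC a b κ d) μ = 0 := by
      rw [Soff]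
      apply Finset.sum_eq_zero
      intro k _
      apply Finset.sum_eq_zero
      intro l _
      by_cases hc : k = i ∨ l = i
      · rw [if_pos hc]
      rw [if_neg hc, Eterm]
      by_cases hkl : μ (k, l) = 0
      · rw [if_pos hkl]
      rw [if_neg hkl]
      have hzero : solveC a b κ d (μ - ee (k, l) + ee (i, l) + ee (k, i)) = 0 := by
        apply solveC_not_good
        intro hgood2
        exact hgood ((good_target_iff a b μ i k l hkl).1 hgood2)
      rw [hzero, mul_zero]
    rw [hZ, hSoff, mul_zero, add_zero]

lemma pderiv_comm' (p q : Fin n × Fin n) (f : MvPolynomial (Fin n × Fin n) ℂ) :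
    pderiv p (pderiv q f) = pderiv q (pderiv p f) := by
  rcases eq_or_ne p q with rfl | hpq
  · rfl
  induction f using MvPolynomial.induction_on' with
  | monomial s a =>
    rw [pderiv_monomial, pderiv_monomial, pderiv_monomial, pderiv_monomial]
    have hsub : s - Finsupp.single q 1 - Finsupp.single p 1
        = s - Finsupp.single p 1 - Finsupp.single q 1 := by
      rw [tsub_tsub, tsub_tsub, add_comm]
    have h1 : ((s - Finsupp.single q 1 : (Fin n × Fin n) →₀ ℕ)) p = s p := by
      rw [Finsupp.tsub_apply, Finsupp.single_eq_of_ne' (Ne.symm hpq)]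
      omega
    have h2 : ((s - Finsupp.single p 1 : (Fin n × Fin n) →₀ ℕ)) q = s q := by
      rw [Finsupp.tsub_apply, Finsupp.single_eq_of_ne' hpq]
      omega
    rw [hsub, h1, h2]
    congr 1
    ring
  | add f g hf hg => simp only [map_add, hf, hg]

lemma pderiv_X_mul'' (p q : Fin n × Fin n) (f : MvPolynomial (Fin n × Fin n) ℂ) :
    pderiv p (X q * f) = (if q = p then f else 0) + X q * pderiv p f := by
  rw [pderiv_mul]
  rcases eq_or_ne q p with rfl | h
  · rw [if_pos rfl, pderiv_X_self, one_mul]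
  · rw [if_neg h, pderiv_X_of_ne h, zero_mul, zero_add]


lemma pd3 (u v s : Fin n × Fin n) (f : MvPolynomial (Fin n × Fin n) ℂ) :
    pderiv u (pderiv v (pderiv s f)) = pderiv v (pderiv s (pderiv u f)) := by
  rw [pderiv_comm' u v (pderiv s f)]
  exact congrArg _ (pderiv_comm' u s f)

lemma pd4 (u v s t : Fin n × Fin n) (f : MvPolynomial (Fin n × Fin n) ℂ) :
    pderiv u (pderiv v (pderiv s (pderiv t f)))
      = pderiv s (pderiv t (pderiv u (pderiv v f))) := by
  have h1 : pderiv v (pderiv s (pderiv t f)) = pderiv s (pderiv t (pderiv v f)) :=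
    pd3 v s t f
  rw [h1]
  exact pd3 u s t (pderiv v f)

lemma hsum (f : Fin n → Fin n → MvPolynomial (Fin n × Fin n) ℂ) :
    (∑ k : Fin n, ∑ l : Fin n, f k l) = ∑ p : Fin n × Fin n, f p.1 p.2 :=
  (Fintype.sum_prod_type (f := fun p : Fin n × Fin n => f p.1 p.2)).symm

lemma Dop_eq (κ : ℂ) (i j : Fin n) (Q : MvPolynomial (Fin n × Fin n) ℂ) :
    Dop n κ i j Q = C κ * pderiv (i, j) Q
      + ∑ p : Fin n × Fin n, X p * pderiv (i, p.2) (pderiv (p.1, j) Q) := by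
  rw [Dop, hsum fun k l => X (k, l) * pderiv (i, l) (pderiv (k, j) Q)]

set_option maxHeartbeats 1000000 in
lemma Dop_Dop (κ : ℂ) (i j : Fin n) (P : MvPolynomial (Fin n × Fin n) ℂ) :
    Dop n κ i i (Dop n κ j j P)
      = C κ * C κ * pderiv (i,i) (pderiv (j,j) P)
        + C κ * pderiv (j,i) (pderiv (i,j) P)
        + C κ * (∑ p : Fin n × Fin n, X p * pderiv (i,i) (pderiv (j,p.2) (pderiv (p.1,j) P)))
        + C κ * (∑ p : Fin n × Fin n, X p * pderiv (i,p.2) (pderiv (p.1,i) (pderiv (j,j) P)))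
        + (∑ p : Fin n × Fin n, X p * pderiv (i,p.2) (pderiv (j,i) (pderiv (p.1,j) P)))
        + (∑ p : Fin n × Fin n, X p * pderiv (p.1,i) (pderiv (j,p.2) (pderiv (i,j) P)))
        + ∑ p : Fin n × Fin n, ∑ q : Fin n × Fin n,
            X p * (X q * pderiv (i,p.2) (pderiv (p.1,i) (pderiv (j,q.2) (pderiv (q.1,j) P)))) := by
  have e1 : pderiv ((i,i) : Fin n × Fin n) (Dop n κ j j P)
      = C κ * pderiv (i,i) (pderiv (j,j) P) + (pderiv (j,i) (pderiv (i,j) P)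
        + ∑ p : Fin n × Fin n, X p * pderiv (i,i) (pderiv (j,p.2) (pderiv (p.1,j) P))) := by
    rw [Dop_eq, map_add, pderiv_C_mul, map_sum]
    congr 1
    rw [Finset.sum_congr rfl fun p (_ : p ∈ Finset.univ) =>
      pderiv_X_mul'' (i,i) p (pderiv (j, p.2) (pderiv (p.1, j) P))]
    rw [Finset.sum_add_distrib]
    congr 1
    rw [Finset.sum_ite_eq' Finset.univ ((i,i) : Fin n × Fin n)
      (fun p => pderiv (j, p.2) (pderiv (p.1, j) P))]
    exact if_pos (Finset.mem_univ _)
  have e2 : ∀ k l : Fin n,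
      pderiv ((i,l) : Fin n × Fin n) (pderiv ((k,i) : Fin n × Fin n) (Dop n κ j j P))
        = C κ * pderiv (i,l) (pderiv (k,i) (pderiv (j,j) P))
          + (pderiv (i,l) (pderiv (j,i) (pderiv (k,j) P))
          + pderiv (k,i) (pderiv (j,l) (pderiv (i,j) P))
          + ∑ q : Fin n × Fin n,
              X q * pderiv (i,l) (pderiv (k,i) (pderiv (j,q.2) (pderiv (q.1,j) P)))) := by
    intro k l
    rw [Dop_eq, map_add, map_add, pderiv_C_mul, pderiv_C_mul, map_sum, map_sum]
    congr 1
    have hterm : ∀ q : Fin n × Fin n,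
        pderiv ((i,l) : Fin n × Fin n) (pderiv ((k,i) : Fin n × Fin n)
            (X q * pderiv (j, q.2) (pderiv (q.1, j) P)))
          = (if q = ((k,i) : Fin n × Fin n)
                then pderiv (i,l) (pderiv (j,q.2) (pderiv (q.1,j) P)) else 0)
            + ((if q = ((i,l) : Fin n × Fin n)
                then pderiv (k,i) (pderiv (j,q.2) (pderiv (q.1,j) P)) else 0)
            + X q * pderiv (i,l) (pderiv (k,i) (pderiv (j,q.2) (pderiv (q.1,j) P)))) := by
      intro q
      rw [pderiv_X_mul'', map_add, pderiv_X_mul'',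
        apply_ite (pderiv ((i,l) : Fin n × Fin n)), map_zero]
    rw [Finset.sum_congr rfl fun q (_ : q ∈ Finset.univ) => hterm q]
    rw [Finset.sum_add_distrib, Finset.sum_add_distrib]
    rw [Finset.sum_ite_eq' Finset.univ ((k,i) : Fin n × Fin n)
      (fun q => pderiv (i,l) (pderiv (j,q.2) (pderiv (q.1,j) P))), if_pos (Finset.mem_univ _)]
    rw [Finset.sum_ite_eq' Finset.univ ((i,l) : Fin n × Fin n)
      (fun q => pderiv (k,i) (pderiv (j,q.2) (pderiv (q.1,j) P))), if_pos (Finset.mem_univ _)]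
    ring
  rw [Dop_eq κ i i (Dop n κ j j P), e1]
  have hstep : (∑ p : Fin n × Fin n, X p * pderiv (i,p.2) (pderiv (p.1,i) (Dop n κ j j P)))
      = ∑ p : Fin n × Fin n,
          X p * (C κ * pderiv (i,p.2) (pderiv (p.1,i) (pderiv (j,j) P))
          + (pderiv (i,p.2) (pderiv (j,i) (pderiv (p.1,j) P))
          + pderiv (p.1,i) (pderiv (j,p.2) (pderiv (i,j) P))
          + ∑ q : Fin n × Fin n,
              X q * pderiv (i,p.2) (pderiv (p.1,i) (pderiv (j,q.2) (pderiv (q.1,j) P))))) :=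
    Finset.sum_congr rfl fun p _ => congrArg (fun z => X p * z) (e2 p.1 p.2)
  rw [hstep]
  have expand : ∀ p : Fin n × Fin n,
      X p * (C κ * pderiv (i,p.2) (pderiv (p.1,i) (pderiv (j,j) P))
          + (pderiv (i,p.2) (pderiv (j,i) (pderiv (p.1,j) P))
          + pderiv (p.1,i) (pderiv (j,p.2) (pderiv (i,j) P))
          + ∑ q : Fin n × Fin n,
              X q * pderiv (i,p.2) (pderiv (p.1,i) (pderiv (j,q.2) (pderiv (q.1,j) P)))))
        = C κ * (X p * pderiv (i,p.2) (pderiv (p.1,i) (pderiv (j,j) P)))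
          + (X p * pderiv (i,p.2) (pderiv (j,i) (pderiv (p.1,j) P))
          + X p * pderiv (p.1,i) (pderiv (j,p.2) (pderiv (i,j) P))
          + ∑ q : Fin n × Fin n,
              X p * (X q * pderiv (i,p.2) (pderiv (p.1,i) (pderiv (j,q.2) (pderiv (q.1,j) P))))) := by
    intro p
    rw [mul_add, mul_add, mul_add, Finset.mul_sum]
    ring
  rw [Finset.sum_congr rfl fun p (_ : p ∈ Finset.univ) => expand p]
  rw [Finset.sum_add_distrib, Finset.sum_add_distrib, Finset.sum_add_distrib,
    ← Finset.mul_sum]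
  ring

set_option maxHeartbeats 1000000 in
theorem Dop_comm (κ : ℂ) (i j : Fin n) (P : MvPolynomial (Fin n × Fin n) ℂ) :
    Dop n κ i i (Dop n κ j j P) = Dop n κ j j (Dop n κ i i P) := by
  rw [Dop_Dop κ i j P, Dop_Dop κ j i P]
  have c1 : pderiv ((i,i) : Fin n × Fin n) (pderiv (j,j) P)
      = pderiv (j,j) (pderiv (i,i) P) := pderiv_comm' _ _ _
  have c2 : pderiv ((j,i) : Fin n × Fin n) (pderiv (i,j) P)
      = pderiv (i,j) (pderiv (j,i) P) := pderiv_comm' _ _ _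
  have c3 : (∑ p : Fin n × Fin n, X p * pderiv (i,i) (pderiv (j,p.2) (pderiv (p.1,j) P)))
      = ∑ p : Fin n × Fin n, X p * pderiv (j,p.2) (pderiv (p.1,j) (pderiv (i,i) P)) :=
    Finset.sum_congr rfl fun p _ => congrArg (fun z => X p * z) (pd3 _ _ _ _)
  have c4 : (∑ p : Fin n × Fin n, X p * pderiv (i,p.2) (pderiv (p.1,i) (pderiv (j,j) P)))
      = ∑ p : Fin n × Fin n, X p * pderiv (j,j) (pderiv (i,p.2) (pderiv (p.1,i) P)) :=
    Finset.sum_congr rfl fun p _ => congrArg (fun z => X p * z) (pd3 _ _ _ _).symm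
  have c5 : (∑ p : Fin n × Fin n, X p * pderiv (i,p.2) (pderiv (j,i) (pderiv (p.1,j) P)))
      = ∑ p : Fin n × Fin n, X p * pderiv (p.1,j) (pderiv (i,p.2) (pderiv (j,i) P)) :=
    Finset.sum_congr rfl fun p _ => congrArg (fun z => X p * z) (pd3 _ _ _ _).symm
  have c6 : (∑ p : Fin n × Fin n, X p * pderiv (p.1,i) (pderiv (j,p.2) (pderiv (i,j) P)))
      = ∑ p : Fin n × Fin n, X p * pderiv (j,p.2) (pderiv (i,j) (pderiv (p.1,i) P)) :=
    Finset.sum_congr rfl fun p _ => congrArg (fun z => X p * z) (pd3 _ _ _ _)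
  have c7 : (∑ p : Fin n × Fin n, ∑ q : Fin n × Fin n,
        X p * (X q * pderiv (i,p.2) (pderiv (p.1,i) (pderiv (j,q.2) (pderiv (q.1,j) P)))))
      = ∑ p : Fin n × Fin n, ∑ q : Fin n × Fin n,
        X p * (X q * pderiv (j,p.2) (pderiv (p.1,j) (pderiv (i,q.2) (pderiv (q.1,i) P)))) := by
    rw [Finset.sum_comm]
    refine Finset.sum_congr rfl fun p _ => Finset.sum_congr rfl fun q _ => ?_
    rw [pd4 (i,q.2) (q.1,i) (j,p.2) (p.1,j) P]
    ring
  rw [c1, c2, c3, c4, c5, c6, c7]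
  ring



lemma Efun_sums (a b : Fin n → ℕ) (κ : ℂ) (c : M n → ℂ)
    (hc : ∀ ν, c ν ≠ 0 → good a b ν) (i : Fin n) (μ : M n) (h : Efun κ i c μ ≠ 0) :
    (∀ m, rowS μ m + (if i = m then 1 else 0) = a m) ∧
    (∀ m, colS μ m + (if i = m then 1 else 0) = b m) := by
  rw [Efun] at h
  have hcases : κ * ((μ (i, i) : ℂ) + 1) * c (μ + ee (i, i)) ≠ 0 ∨
      (∑ k : Fin n, ∑ l : Fin n, Eterm i c μ k l) ≠ 0 := by
    by_contra hcon
    push_neg at hcon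
    exact h (by rw [hcon.1, hcon.2, add_zero])
  rcases hcases with hA | hS
  · have hgood : good a b (μ + ee (i, i)) := hc _ (right_ne_zero_of_mul hA)
    constructor <;> intro m
    · have h1 := hgood.1 m
      rw [rowS_add, rowS_ee] at h1
      simpa using h1
    · have h1 := hgood.2 m
      rw [colS_add, colS_ee] at h1
      simpa using h1
  · obtain ⟨k, -, hk⟩ := Finset.exists_ne_zero_of_sum_ne_zero hS
    obtain ⟨l, -, hl⟩ := Finset.exists_ne_zero_of_sum_ne_zero hk
    rw [Eterm] at hl
    by_cases hkl : μ (k, l) = 0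
    · rw [if_pos hkl] at hl
      exact absurd rfl hl
    rw [if_neg hkl] at hl
    have hct : c (μ - ee (k, l) + ee (i, l) + ee (k, i)) ≠ 0 := right_ne_zero_of_mul hl
    have hgood := hc _ hct
    constructor <;> intro m
    · have h1 := hgood.1 m
      rwa [rowS_target μ i k l m hkl] at h1
    · have h1 := hgood.2 m
      rwa [colS_target μ i k l m hkl] at h1

lemma Soff_eq_zero (i : Fin n) (c : M n → ℂ) (μ : M n)
    (h : ∀ k l : Fin n, k ≠ i → l ≠ i → μ (k, l) ≠ 0 →
      c (μ - ee (k, l) + ee (i, l) + ee (k, i)) = 0) :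
    Soff i c μ = 0 := by
  rw [Soff]
  apply Finset.sum_eq_zero
  intro k _
  apply Finset.sum_eq_zero
  intro l _
  by_cases hc : k = i ∨ l = i
  · rw [if_pos hc]
  rw [if_neg hc, Eterm]
  push_neg at hc
  by_cases hkl : μ (k, l) = 0
  · rw [if_pos hkl]
  rw [if_neg hkl, h k l hc.1 hc.2 hkl, mul_zero]

lemma w_target_le (μ : M n) (i k l : Fin n) (hk : k ≠ i) (hl : l ≠ i) :
    w (μ - ee (k, l) + ee (i, l) + ee (k, i)) ≤ w μ := by
  rw [w_add_ee_off _ (k, i) hk, w_add_ee_off _ (i, l) (Ne.symm hl)]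
  exact w_tsub_le _ _

noncomputable def Bbound (a : Fin n → ℕ) : M n :=
  Finsupp.equivFunOnFinite.symm (fun p : Fin n × Fin n => a p.1)

noncomputable def Pbuild (a b : Fin n → ℕ) (κ : ℂ) (d : M n → ℂ) :
    MvPolynomial (Fin n × Fin n) ℂ :=
  ∑ ν ∈ Finset.filter (good a b) (Finset.Iic (Bbound a)),
    monomial ν (solveC a b κ d ν)

lemma good_le_Bbound (a b : Fin n → ℕ) (ν : M n) (hg : good a b ν) : ν ≤ Bbound a := by
  intro p
  have h1 : ν p ≤ rowS ν p.1 := by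
    rw [rowS]
    exact Finset.single_le_sum (f := fun j => ν (p.1, j)) (fun _ _ => Nat.zero_le _)
      (Finset.mem_univ p.2)
  have h2 : rowS ν p.1 = a p.1 := hg.1 p.1
  have h3 : Bbound a p = a p.1 := by
    rw [Bbound]
    simp [Finsupp.equivFunOnFinite]
    rfl
  omega

lemma coeff_Pbuild (a b : Fin n → ℕ) (κ : ℂ) (d : M n → ℂ) (μ : M n) :
    coeff μ (Pbuild a b κ d) = solveC a b κ d μ := by
  rw [Pbuild, coeff_sum]
  simp_rw [coeff_monomial]
  rw [Finset.sum_ite_eq' (Finset.filter (good a b) (Finset.Iic (Bbound a))) μ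
    (fun ν => solveC a b κ d ν)]
  by_cases hmem : μ ∈ Finset.filter (good a b) (Finset.Iic (Bbound a))
  · rw [if_pos hmem]
  · rw [if_neg hmem]
    have hng : ¬ good a b μ := by
      intro hg
      exact hmem (Finset.mem_filter.2 ⟨Finset.mem_Iic.2 (good_le_Bbound a b μ hg), hg⟩)
    exact (solveC_not_good a b κ d μ hng).symm

lemma Pbuild_good (a b : Fin n → ℕ) (κ : ℂ) (d : M n → ℂ) (ν : M n)
    (h : coeff ν (Pbuild a b κ d) ≠ 0) : good a b ν := by
  by_contra hg
  rw [coeff_Pbuild] at h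
  exact h (solveC_not_good a b κ d ν hg)

lemma coeff_fun_Pbuild (a b : Fin n → ℕ) (κ : ℂ) (d : M n → ℂ) :
    (fun ν : M n => coeff ν (Pbuild a b κ d)) = solveC a b κ d :=
  funext (coeff_Pbuild a b κ d)

lemma Pbuild_constr (a b : Fin n → ℕ) (κ : ℂ)
    (hκ : ¬∃ m : ℤ, κ = (m : ℂ) ∧ ∃ i : Fin n,
      2 - ((a i : ℤ) + (b i : ℤ)) ≤ m ∧ m ≤ 1 - (max (a i) (b i) : ℤ))
    (d : M n → ℂ) (i : Fin n) (μ : M n) (hdiag : ∀ j, j < i → μ (j, j) = 0) :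
    coeff μ (Dop n κ i i (Pbuild a b κ d)) = 0 := by
  rw [coeff_Dop, coeff_fun_Pbuild]
  exact solveC_Efun a b κ hκ d i μ hdiag

set_option maxHeartbeats 1000000 in
lemma Pbuild_vanish (a b : Fin n → ℕ) (κ : ℂ)
    (hκ : ¬∃ m : ℤ, κ = (m : ℂ) ∧ ∃ i : Fin n,
      2 - ((a i : ℤ) + (b i : ℤ)) ≤ m ∧ m ≤ 1 - (max (a i) (b i) : ℤ))
    (d : M n → ℂ) :
    ∀ (N : ℕ) (i : Fin n) (μ : M n), w μ ≤ N →
      coeff μ (Dop n κ i i (Pbuild a b κ d)) = 0 := by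
  intro N
  induction N with
  | zero =>
    intro i μ hw
    exact Pbuild_constr a b κ hκ d i μ
      (fun j _ => (w_eq_zero_iff μ).1 (Nat.le_zero.1 hw) j)
  | succ N ih =>
    intro i μ hw
    by_cases hA : ∀ j, j < i → μ (j, j) = 0
    · exact Pbuild_constr a b κ hκ d i μ hA
    -- there is a minimal j < i with μ (j,j) ≠ 0
    push_neg at hA
    have hTne : (Finset.univ.filter fun m => m < i ∧ μ (m, m) ≠ 0).Nonempty := by
      obtain ⟨j, hj1, hj2⟩ := hA
      exact ⟨j, Finset.mem_filter.2 ⟨Finset.mem_univ j, hj1, hj2⟩⟩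
    set j := (Finset.univ.filter fun m => m < i ∧ μ (m, m) ≠ 0).min' hTne with hjdef
    have hjmem := Finset.min'_mem _ hTne
    rw [Finset.mem_filter] at hjmem
    have hji : j < i := hjmem.2.1
    have hjj : μ (j, j) ≠ 0 := hjmem.2.2
    have hjmin : ∀ m, m < j → μ (m, m) = 0 := by
      intro m hm
      by_contra hmm
      have hmi : m < i := lt_trans hm hji
      exact absurd (Finset.min'_le _ m (Finset.mem_filter.2 ⟨Finset.mem_univ m, hmi, hmm⟩))
        (not_le.2 hm)
    by_contra hne
    -- row/column sums of μ
    have hsums := Efun_sums a b κ (fun ν => coeff ν (Pbuild a b κ d))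
      (fun ν h => Pbuild_good a b κ d ν h) i μ
      (by rw [coeff_Dop] at hne; exact hne)
    have hij : i ≠ j := fun h => absurd hji (by rw [h]; exact lt_irrefl j)
    have hrowj : rowS μ j = a j := by
      have := hsums.1 j
      rw [if_neg hij] at this
      omega
    have hcolj : colS μ j = b j := by
      have := hsums.2 j
      rw [if_neg hij] at this
      omega
    have hcancel : μ - ee (j, j) + ee (j, j) = μ :=
      tsub_add_cancel_of_le (Finsupp.single_le_iff.2 (by omega))
    have hwlt : w (μ - ee (j, j)) < w μ := w_tsub_ee_lt μ j hjj
    -- Way 1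
    have way1 : coeff (μ - ee (j, j)) (Dop n κ j j (Dop n κ i i (Pbuild a b κ d)))
        = lamC κ j (μ - ee (j, j)) * coeff μ (Dop n κ i i (Pbuild a b κ d)) := by
      rw [coeff_Dop, key', hcancel]
      have hsoff : Soff j (fun ν => coeff ν (Dop n κ i i (Pbuild a b κ d)))
          (μ - ee (j, j)) = 0 := by
        apply Soff_eq_zero
        intro k l hk hl hkl
        apply ih i
        have h1 := w_target_le (μ - ee (j, j)) j k l hk hl
        omega
      rw [hsoff, add_zero]
    -- Way 2
    have way2 : coeff (μ - ee (j, j)) (Dop n κ j j (Dop n κ i i (Pbuild a b κ d))) = 0 := by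
      rw [← Dop_comm κ i j (Pbuild a b κ d)]
      rw [coeff_Dop, key']
      have hterm0 : coeff ((μ - ee (j, j)) + ee (i, i)) (Dop n κ j j (Pbuild a b κ d)) = 0 := by
        apply Pbuild_constr a b κ hκ d j
        intro m hm
        rw [Finsupp.add_apply, Finsupp.tsub_apply]
        have hmi : m ≠ i := fun h => absurd (lt_trans hm hji) (by rw [h]; exact lt_irrefl i)
        have h1 : Finsupp.single ((i, i) : Fin n × Fin n) 1 (m, m) = 0 :=
          Finsupp.single_eq_of_ne' (by simp [Ne.symm hmi])
        have h2 : Finsupp.single ((j, j) : Fin n × Fin n) 1 (m, m) = 0 :=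
          Finsupp.single_eq_of_ne' (by
            intro hcon
            rw [Prod.mk.injEq] at hcon
            exact absurd hm (by rw [← hcon.1]; exact lt_irrefl j))
        rw [h1, hjmin m hm]
        simp
      have hsoff : Soff i (fun ν => coeff ν (Dop n κ j j (Pbuild a b κ d)))
          (μ - ee (j, j)) = 0 := by
        apply Soff_eq_zero
        intro k l hk hl hkl
        apply ih j
        have h1 := w_target_le (μ - ee (j, j)) i k l hk hl
        omega
      rw [hterm0, hsoff, mul_zero, zero_add]
    rw [way2] at way1
    have hlam : lamC κ j (μ - ee (j, j)) ≠ 0 := by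
      apply lam_ne a b κ hκ j (μ - ee (j, j))
      · rw [hcancel]; exact hrowj
      · rw [hcancel]; exact hcolj
    exact hne (by
      have := way1.symm
      rcases mul_eq_zero.1 this with h | h
      · exact absurd h hlam
      · exact h)

lemma inj_vanish (a b : Fin n → ℕ) (κ : ℂ)
    (hκ : ¬∃ m : ℤ, κ = (m : ℂ) ∧ ∃ i : Fin n,
      2 - ((a i : ℤ) + (b i : ℤ)) ≤ m ∧ m ≤ 1 - (max (a i) (b i) : ℤ))
    (P : MvPolynomial (Fin n × Fin n) ℂ)
    (hker : ∀ i, Dop n κ i i P = 0) (hsupp : inPab n a b P)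
    (h0 : ∀ ν : M n, good a b ν → (∀ i, ν (i, i) = 0) → coeff ν P = 0) : P = 0 := by
  have hgn : ∀ ν : M n, coeff ν P ≠ 0 → good a b ν := by
    intro ν h
    exact hsupp ν (mem_support_iff.2 h)
  suffices H : ∀ (N : ℕ) (ν : M n), w ν ≤ N → coeff ν P = 0 by
    exact eq_zero_iff.2 fun dd => H (w dd) dd le_rfl
  intro N
  induction N with
  | zero =>
    intro ν hw
    by_cases hg : good a b ν
    · exact h0 ν hg ((w_eq_zero_iff ν).1 (Nat.le_zero.1 hw))
    · by_contra h
      exact hg (hgn ν h)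
  | succ N ih =>
    intro ν hw
    by_cases hdg : ∀ i, ν (i, i) = 0
    · by_cases hg : good a b ν
      · exact h0 ν hg hdg
      · by_contra h
        exact hg (hgn ν h)
    push_neg at hdg
    obtain ⟨i, hi⟩ := hdg
    have hcancel : ν - ee (i, i) + ee (i, i) = ν :=
      tsub_add_cancel_of_le (Finsupp.single_le_iff.2 (by omega))
    have hrel : Efun κ i (fun m => coeff m P) (ν - ee (i, i)) = 0 := by
      rw [← coeff_Dop, hker i, coeff_zero]
    rw [key', hcancel] at hrel
    have hwlt : w (ν - ee (i, i)) < w ν := w_tsub_ee_lt ν i hi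
    have hsoff : Soff i (fun m => coeff m P) (ν - ee (i, i)) = 0 := by
      apply Soff_eq_zero
      intro k l hk hl hkl
      apply ih
      have h1 := w_target_le (ν - ee (i, i)) i k l hk hl
      omega
    rw [hsoff, add_zero] at hrel
    by_cases hcf : coeff ν P = 0
    · exact hcf
    have hgood := hgn ν hcf
    have hlam : lamC κ i (ν - ee (i, i)) ≠ 0 := by
      apply lam_ne a b κ hκ i (ν - ee (i, i))
      · rw [hcancel]; exact hgood.1 i
      · rw [hcancel]; exact hgood.2 i
    rcases mul_eq_zero.1 hrel with h | h
    · exact absurd h hlam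
    · exact h

end Stmt4

open Stmt4

/-- if `κ ∉ Ξ_{𝐚,𝐛} = ℤ ∩ ⋃_i [2−(a_i+b_i), 1−max{a_i,b_i}]`, the map
`Φ : 𝒫_{𝐚,𝐛}(κ) → ℂ^{𝒩₀(𝐚,𝐛)}` sending a polynomial to its coefficients at the monomials
`T^ν`, `ν ∈ 𝒩₀(𝐚,𝐛)`, is a bijection (an isomorphism of complex vector spaces, the map
being manifestly linear). -/
theorem stmt4 (n : ℕ) (hn : 1 ≤ n) (a b : Fin n → ℕ) (κ : ℂ)
    (hκ : ¬∃ m : ℤ, κ = (m : ℂ) ∧ ∃ i : Fin n,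
      2 - ((a i : ℤ) + (b i : ℤ)) ≤ m ∧ m ≤ 1 - (max (a i) (b i) : ℤ)) :
    Function.Bijective
      (fun P : {P : MvPolynomial (Fin n × Fin n) ℂ //
            (∀ i, Dop n κ i i P = 0) ∧ inPab n a b P} =>
        fun ν : {ν : (Fin n × Fin n) →₀ ℕ //
            ((∀ i : Fin n, ∑ j : Fin n, ν (i, j) = a i) ∧
              (∀ j : Fin n, ∑ i : Fin n, ν (i, j) = b j)) ∧
            ∀ i : Fin n, ν (i, i) = 0} =>
          MvPolynomial.coeff ν.val P.val) := by
  constructor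
  · intro P1 P2 heq
    apply Subtype.ext
    have hzero : P1.val - P2.val = 0 := by
      apply inj_vanish a b κ hκ
      · intro i
        rw [Dop_sub, P1.prop.1 i, P2.prop.1 i, sub_zero]
      · intro dd hdd
        rcases Finset.mem_union.1 (MvPolynomial.support_sub _ _ _ hdd) with h | h
        · exact P1.prop.2 dd h
        · exact P2.prop.2 dd h
      · intro ν hg hdf
        have := congrFun heq ⟨ν, ⟨hg.1, hg.2⟩, hdf⟩
        rw [MvPolynomial.coeff_sub]
        exact sub_eq_zero_of_eq this
    exact sub_eq_zero.1 hzero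
  · intro g
    classical
    set d : Stmt4.M n → ℂ := fun ν =>
      if h : ((∀ i : Fin n, ∑ j : Fin n, ν (i, j) = a i) ∧
          (∀ j : Fin n, ∑ i : Fin n, ν (i, j) = b j)) ∧
          (∀ i : Fin n, ν (i, i) = 0) then g ⟨ν, h⟩ else 0 with hd
    refine ⟨⟨Pbuild a b κ d, fun i => ?_, ?_⟩, ?_⟩
    · exact MvPolynomial.eq_zero_iff.2 fun dd => Pbuild_vanish a b κ hκ d (w dd) i dd le_rfl
    · intro dd hdd
      have hg := Pbuild_good a b κ d dd (MvPolynomial.mem_support_iff.1 hdd)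
      exact ⟨hg.1, hg.2⟩
    · funext ν
      show MvPolynomial.coeff ν.val (Pbuild a b κ d) = g ν
      rw [coeff_Pbuild, solveC_diag a b κ d ν.val ν.prop.2]
      have hg : good a b ν.val := ⟨ν.prop.1.1, ν.prop.1.2⟩
      rw [if_pos hg, hd]
      simp only []
      rw [dif_pos ν.prop]
end

section
/- In the field ℂ(κ) of rational functions, define for integers a,b,c ≥ 0: A_{a,b,c} = ((a+2b+3c+2κ−3)^{(c)} / (κ−2)^{(c)}) · (b+2c+κ−1)^{(a+b+c)}, where (x)^{(r)} = x(x+1)⋯(x+r−1) is the ascending Pochhammer symbol. Then these elements satisfy, for all a,b,c ≥ 0: (i) (κ+b+2c−1)·A_{a,b+1,c} = A_{a+2,b,c}; (ii) (κ+c−2)·A_{a,b,c+1} = 2·A_{a+1,b+1,c} + a·A_{a−1,b+2,c} (where the last term is 0 when a = 0); (iii) A_{a,0,0} = (κ−1)^{(a)}; and moreover (b+2c+κ−1)^{(a+b+c)} = (2b+3c+κ−1)^{(a)}·(b+3c+κ−1)^{(b)}·(b+2c+κ−1)^{(c)}. (These recursions express that the power series G^{(3)} = Σ_{a,b,c} A_{a,b,c}·s₁^a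 s₂^b s₃^c/(a!b!c!) is annihilated by 𝓛₂ = (κ−1)∂₂ + s₂∂₂² + 2s₃∂₂∂₃ − ∂₁² and 𝓛₃ = (κ−2)∂₃ + s₃∂₃² − 2∂₁∂₂ − s₁∂₂².) -/
/-!
Each identity is a polynomial identity once one factor is peeled off a Pochhammer symbol via
`(x)^{(r+1)} = x·(x+1)^{(r)} = (x)^{(r)}·(x+r)`. In (ii) the three terms share the factor
`Babc a b c`, and what remains is `a + 2b + 4c + 2κ = 2(b + 2c + κ) + a`; the factor `κ + c − 2`
cancels against the last factor of `(κ−2)^{(c+1)}`, which is nonzero since `κ` is transcendental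
over `ℂ`. (iv) is `(x)^{(m+n)} = (x)^{(m)}·(x+m)^{(n)}` applied twice.
-/

/-- The ascending Pochhammer symbol `(x)^{(r)} = x(x+1)⋯(x+r−1)` in `ℂ(κ)`. -/
noncomputable def asc (x : RatFunc ℂ) (r : ℕ) : RatFunc ℂ :=
  (ascPochhammer (RatFunc ℂ) r).eval x

/-- The indeterminate `κ` of `ℂ(κ)`. -/
noncomputable def kappa : RatFunc ℂ := RatFunc.X

/-- `A_{a,b,c} = ((a+2b+3c+2κ−3)^{(c)} / (κ−2)^{(c)}) · (b+2c+κ−1)^{(a+b+c)}`. -/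
noncomputable def Aabc (a b c : ℕ) : RatFunc ℂ :=
  asc ((a : RatFunc ℂ) + 2 * b + 3 * c + 2 * kappa - 3) c / asc (kappa - 2) c *
    asc ((b : RatFunc ℂ) + 2 * c + kappa - 1) (a + b + c)

lemma asc_succ_right (x : RatFunc ℂ) (r : ℕ) : asc x (r + 1) = asc x r * (x + r) :=
  ascPochhammer_succ_eval r x

lemma asc_succ_left (x : RatFunc ℂ) (r : ℕ) : asc x (r + 1) = x * asc (x + 1) r := by
  simp [asc, ascPochhammer_succ_left, Polynomial.eval_comp]

lemma asc_add (x : RatFunc ℂ) (m n : ℕ) : asc x (m + n) = asc x m * asc (x + m) n := by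
  simpa [asc, Polynomial.eval_comp] using
    (congrArg (Polynomial.eval x) (ascPochhammer_mul _ m n)).symm

lemma kappa_sub_two_add_natCast_ne_zero (c : ℕ) : kappa - 2 + c ≠ 0 := by
  have h : kappa - 2 + c =
      algebraMap (Polynomial ℂ) (RatFunc ℂ) (.X + .C ((c : ℂ) - 2)) := by
    simp [kappa, RatFunc.algebraMap_X, map_ofNat]
    ring
  rw [h]
  exact RatFunc.algebraMap_ne_zero (Polynomial.X_add_C_ne_zero _)

lemma kappa_add_mul_Aabc_snd_succ (a b c : ℕ) :
    (kappa + b + 2 * c - 1) * Aabc a (b + 1) c = Aabc (a + 2) b c := by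
  rw [Aabc, Aabc, show a + 2 + b + c = a + (b + 1) + c + 1 by omega, asc_succ_left]
  push_cast
  ring_nf

/-- The common factor of the three terms of (ii); `Babc (a + 1) b c = Aabc a (b + 2) c`. -/
noncomputable def Babc (a b c : ℕ) : RatFunc ℂ :=
  asc ((a : RatFunc ℂ) + 2 * b + 3 * c + 2 * kappa) c / asc (kappa - 2) c *
    asc ((b : RatFunc ℂ) + 2 * c + kappa + 1) (a + b + c + 1)

lemma kappa_sub_two_mul_Aabc_thd_succ (a b c : ℕ) :
    (kappa + c - 2) * Aabc a b (c + 1) =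
      ((a : RatFunc ℂ) + 2 * b + 4 * c + 2 * kappa) * Babc a b c := by
  have hc := kappa_sub_two_add_natCast_ne_zero c
  rw [Aabc, Babc, asc_succ_right (kappa - 2), asc_succ_right,
    show a + b + (c + 1) = a + b + c + 1 by omega]
  field_simp
  push_cast
  ring_nf

lemma Aabc_fst_succ_snd_succ (a b c : ℕ) :
    Aabc (a + 1) (b + 1) c = ((b : RatFunc ℂ) + 2 * c + kappa) * Babc a b c := by
  rw [Aabc, Babc, show a + 1 + (b + 1) + c = a + b + c + 1 + 1 by omega, asc_succ_left]
  push_cast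
  ring_nf

lemma Aabc_snd_add_two (a b c : ℕ) : Aabc a (b + 2) c = Babc (a + 1) b c := by
  rw [Aabc, Babc, show a + (b + 2) + c = a + 1 + b + c + 1 by omega]
  push_cast
  ring_nf

lemma natCast_mul_Aabc_fst_pred (a b c : ℕ) :
    (a : RatFunc ℂ) * Aabc (a - 1) (b + 2) c = a * Babc a b c := by
  cases a with
  | zero => simp
  | succ a => rw [Nat.add_sub_cancel, Aabc_snd_add_two]

/-- the elements `A_{a,b,c}` of `ℂ(κ)` satisfy
(i) `(κ+b+2c−1)·A_{a,b+1,c} = A_{a+2,b,c}`;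
(ii) `(κ+c−2)·A_{a,b,c+1} = 2·A_{a+1,b+1,c} + a·A_{a−1,b+2,c}` (last term `0` if `a = 0`);
(iii) `A_{a,0,0} = (κ−1)^{(a)}`; and
(iv) `(b+2c+κ−1)^{(a+b+c)} = (2b+3c+κ−1)^{(a)}·(b+3c+κ−1)^{(b)}·(b+2c+κ−1)^{(c)}`. -/
theorem stmt15 (a b c : ℕ) :
    (kappa + b + 2 * c - 1) * Aabc a (b + 1) c = Aabc (a + 2) b c ∧
    (kappa + c - 2) * Aabc a b (c + 1) =
      2 * Aabc (a + 1) (b + 1) c + (a : RatFunc ℂ) * Aabc (a - 1) (b + 2) c ∧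
    Aabc a 0 0 = asc (kappa - 1) a ∧
    asc ((b : RatFunc ℂ) + 2 * c + kappa - 1) (a + b + c) =
      asc (2 * (b : RatFunc ℂ) + 3 * c + kappa - 1) a *
        asc ((b : RatFunc ℂ) + 3 * c + kappa - 1) b *
        asc ((b : RatFunc ℂ) + 2 * c + kappa - 1) c := by
  refine ⟨kappa_add_mul_Aabc_snd_succ a b c, ?_, by simp [Aabc, asc], ?_⟩
  · rw [kappa_sub_two_mul_Aabc_thd_succ, Aabc_fst_succ_snd_succ, natCast_mul_Aabc_fst_pred]
    ring
  · rw [show a + b + c = c + (b + a) by omega, asc_add, asc_add]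
    ring_nf
end

section
/- Let n₁ ≥ n₂ ≥ 1 and n = n₁+n₂. Work in the polynomial ring over ℚ in the indeterminates κ, t_{kl} (1 ≤ k,l ≤ n), u_{1,i}, u_{2,i} (1 ≤ i ≤ n₁), v_{1,j}, v_{2,j} (1 ≤ j ≤ n₂). Set τ₁₁ = Σ_{1≤i,j≤n₁} t_{ij}u_{1,i}u_{2,j}, τ₂₂ = Σ_{1≤i,j≤n₂} t_{n₁+i,n₁+j}v_{1,i}v_{2,j}, τ₁₂ = Σ_{1≤i≤n₁,1≤j≤n₂} t_{i,n₁+j}u_{1,i}v_{2,j}, τ₂₁ = Σ_{1≤i≤n₁,1≤j≤n₂} t_{n₁+j,i}v_{1,j}u_{2,i}, and f = 1 − τ₁₂ − τ₂₁ + (1/4)(τ₁₂−τ₂₁)² + τ₁₁τ₂₂. Then for every pair (i,j) with either 1 ≤ i,j ≤ n₁ or n₁ < i,j ≤ n, the polynomial identity κ·f·(∂f/∂t_{ij}) + (1/2 − κ)·Σ_{k,l=1}^n t_{kl}·(∂f/∂t_{il})·(∂f/∂t_{kj}) + f·Σ_{k,l=1}^n t_{kl}·(∂²f/∂t_{il}∂t_{kj})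 = 0 holds. Equivalently, the function f^{3/2−κ} is annihilated by the mixed Laplacian D_{ij}^{(κ)} = κ·∂/∂t_{ij} + Σ_{k,l=1}^n t_{kl}·∂²/(∂t_{il}∂t_{kj}) for all (i,j) in the two diagonal blocks determined by (n₁,n₂), wherever f^{3/2−κ} is defined. -/
open MvPolynomial

/-- The indeterminates: `Sum.inl ()` is `κ`; then the `t_{kl}` (`1 ≤ k,l ≤ n₁+n₂`); then
the `u_{1,i}, u_{2,i}` (`Bool × Fin n₁`, `false ↦ u₁`, `true ↦ u₂`); then the
`v_{1,j}, v_{2,j}` (`Bool × Fin n₂`). -/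
abbrev HVars (n₁ n₂ : ℕ) : Type :=
  Unit ⊕ (Fin (n₁ + n₂) × Fin (n₁ + n₂)) ⊕ (Bool × Fin n₁) ⊕ (Bool × Fin n₂)

/-- The variable `κ`. -/
noncomputable def kv (n₁ n₂ : ℕ) : MvPolynomial (HVars n₁ n₂) ℚ := X (Sum.inl ())

/-- The variable `t_{ij}`. -/
noncomputable def tv (n₁ n₂ : ℕ) (i j : Fin (n₁ + n₂)) : MvPolynomial (HVars n₁ n₂) ℚ :=
  X (Sum.inr (Sum.inl (i, j)))

/-- The variables `u_{1,i}` (`s = false`) and `u_{2,i}` (`s = true`). -/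
noncomputable def uv (n₁ n₂ : ℕ) (s : Bool) (i : Fin n₁) : MvPolynomial (HVars n₁ n₂) ℚ :=
  X (Sum.inr (Sum.inr (Sum.inl (s, i))))

/-- The variables `v_{1,j}` (`s = false`) and `v_{2,j}` (`s = true`). -/
noncomputable def vv (n₁ n₂ : ℕ) (s : Bool) (j : Fin n₂) : MvPolynomial (HVars n₁ n₂) ℚ :=
  X (Sum.inr (Sum.inr (Sum.inr (s, j))))

/-- `τ₁₁ = Σ_{1≤i,j≤n₁} t_{ij}·u_{1,i}·u_{2,j}`. -/
noncomputable def tau11 (n₁ n₂ : ℕ) : MvPolynomial (HVars n₁ n₂) ℚ :=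
  ∑ i : Fin n₁, ∑ j : Fin n₁,
    tv n₁ n₂ (Fin.castAdd n₂ i) (Fin.castAdd n₂ j) * uv n₁ n₂ false i * uv n₁ n₂ true j

/-- `τ₂₂ = Σ_{1≤i,j≤n₂} t_{n₁+i,n₁+j}·v_{1,i}·v_{2,j}`. -/
noncomputable def tau22 (n₁ n₂ : ℕ) : MvPolynomial (HVars n₁ n₂) ℚ :=
  ∑ i : Fin n₂, ∑ j : Fin n₂,
    tv n₁ n₂ (Fin.natAdd n₁ i) (Fin.natAdd n₁ j) * vv n₁ n₂ false i * vv n₁ n₂ true j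

/-- `τ₁₂ = Σ_{1≤i≤n₁,1≤j≤n₂} t_{i,n₁+j}·u_{1,i}·v_{2,j}`. -/
noncomputable def tau12 (n₁ n₂ : ℕ) : MvPolynomial (HVars n₁ n₂) ℚ :=
  ∑ i : Fin n₁, ∑ j : Fin n₂,
    tv n₁ n₂ (Fin.castAdd n₂ i) (Fin.natAdd n₁ j) * uv n₁ n₂ false i * vv n₁ n₂ true j

/-- `τ₂₁ = Σ_{1≤i≤n₁,1≤j≤n₂} t_{n₁+j,i}·v_{1,j}·u_{2,i}`. -/
noncomputable def tau21 (n₁ n₂ : ℕ) : MvPolynomial (HVars n₁ n₂) ℚ :=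
  ∑ i : Fin n₁, ∑ j : Fin n₂,
    tv n₁ n₂ (Fin.natAdd n₁ j) (Fin.castAdd n₂ i) * vv n₁ n₂ false j * uv n₁ n₂ true i

/-- `f = 1 − τ₁₂ − τ₂₁ + (1/4)(τ₁₂−τ₂₁)² + τ₁₁τ₂₂`. -/
noncomputable def fHerm (n₁ n₂ : ℕ) : MvPolynomial (HVars n₁ n₂) ℚ :=
  1 - tau12 n₁ n₂ - tau21 n₁ n₂ +
    C (1 / 4 : ℚ) * (tau12 n₁ n₂ - tau21 n₁ n₂) ^ 2 + tau11 n₁ n₂ * tau22 n₁ n₂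


/-!
Every `τ_ab` is linear in the `t_kl`, with `∂τ_ab/∂t_kl = x_k y_l` when `t_kl` lies in block
`(a, b)` and `0` otherwise, where `x = (u₁, v₁)` and `y = (u₂, v₂)`. Writing `f = F(τ)` for a
polynomial `F` in a `2 × 2` matrix variable, the chain rule turns every `t`-derivative of `f`
into a derivative of `F` times such monomials, and contracting against `t_kl` reassembles the
`τ_ab`. For `i, j` in block `p` the identity thus becomes `x_i y_j` times a `2 × 2` identity,
which follows from `Σ_ab ∂_pb F ∂_ap F τ_ab = F ∂_pp F` and `Σ_ab ∂_pb ∂_ap F τ_ab = -½ ∂_pp F`.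
-/

open Finset

theorem Derivation.map_aeval_mvPolynomial {R A ι : Type*} [CommSemiring R] [CommSemiring A]
    [Algebra R A] [Fintype ι] (D : Derivation R A A) (g : ι → A) (P : MvPolynomial ι R) :
    D (aeval g P) = ∑ i, aeval g (pderiv i P) * D (g i) := by
  classical
  induction P using MvPolynomial.induction_on with
  | C a => simp
  | add p q hp hq => simp [hp, hq, add_mul, sum_add_distrib]
  | mul_X p i hp =>
    simp [pderiv_X, Pi.single_apply, hp, add_mul, sum_add_distrib, mul_sum, apply_ite, ite_mul,
      mul_assoc]

section Constants

variable {σ : Type*}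

lemma C_inv_two_mul_two : (C 2⁻¹ * 2 : MvPolynomial σ ℚ) = 1 := by
  rw [← map_ofNat C 2, ← C_mul]; norm_num

lemma C_inv_four : (C 4⁻¹ : MvPolynomial σ ℚ) = C 2⁻¹ ^ 2 := by
  rw [← C_pow]; norm_num

end Constants

noncomputable def fBlock : MvPolynomial (Bool × Bool) ℚ :=
  1 - X (false, true) - X (true, false) + C (1 / 4) * (X (false, true) - X (true, false)) ^ 2 +
    X (false, false) * X (true, true)

lemma sum_pderiv_fBlock_mul_pderiv_fBlock (p : Bool) :
    ∑ ab : Bool × Bool, pderiv (p, ab.2) fBlock * pderiv (ab.1, p) fBlock * X ab =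
      fBlock * pderiv (p, p) fBlock := by
  -- the two sides differ by `(c - 4c²) (X₁₂ - X₂₁)² ∂_pp F` with `c = 1/4`
  cases p <;> simp [fBlock, sq, Fintype.sum_prod_type, pderiv_X, Pi.single_apply, C_inv_four]
  · linear_combination (-C 2⁻¹ ^ 2 * (1 + 2 * C 2⁻¹) * X (true, true) *
      (X (false, true) - X (true, false)) ^ 2) * C_inv_two_mul_two
  · linear_combination (-C 2⁻¹ ^ 2 * (1 + 2 * C 2⁻¹) * X (false, false) *
      (X (false, true) - X (true, false)) ^ 2) * C_inv_two_mul_two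

lemma sum_pderiv_pderiv_fBlock (p : Bool) :
    ∑ ab : Bool × Bool, pderiv (p, ab.2) (pderiv (ab.1, p) fBlock) * X ab =
      -C (1 / 2) * pderiv (p, p) fBlock := by
  cases p <;> simp [fBlock, sq, Fintype.sum_prod_type, pderiv_X, Pi.single_apply, C_inv_four]
  · linear_combination (-C 2⁻¹ * X (true, true)) * C_inv_two_mul_two
  · linear_combination (-C 2⁻¹ * X (false, false)) * C_inv_two_mul_two

section Blocks

variable {n₁ n₂ : ℕ}

def blockOf (k : Fin (n₁ + n₂)) : Bool := decide (n₁ ≤ k.val)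

@[simp] lemma blockOf_castAdd (a : Fin n₁) : blockOf (Fin.castAdd n₂ a) = false := by
  simp [blockOf]

@[simp] lemma blockOf_natAdd (b : Fin n₂) : blockOf (Fin.natAdd n₁ b) = true := by
  simp [blockOf]

variable (n₁ n₂) in
noncomputable def xv : Fin (n₁ + n₂) → MvPolynomial (HVars n₁ n₂) ℚ :=
  Fin.append (uv n₁ n₂ false) (vv n₁ n₂ false)

variable (n₁ n₂) in
noncomputable def yv : Fin (n₁ + n₂) → MvPolynomial (HVars n₁ n₂) ℚ :=
  Fin.append (uv n₁ n₂ true) (vv n₁ n₂ true)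

variable (n₁ n₂) in
noncomputable def blockTau : Bool × Bool → MvPolynomial (HVars n₁ n₂) ℚ
  | (false, false) => tau11 n₁ n₂
  | (false, true) => tau12 n₁ n₂
  | (true, false) => tau21 n₁ n₂
  | (true, true) => tau22 n₁ n₂

lemma blockTau_eq_sum (ab : Bool × Bool) :
    blockTau n₁ n₂ ab = ∑ k, ∑ l,
      if (blockOf k, blockOf l) = ab then tv n₁ n₂ k l * (xv n₁ n₂ k * yv n₁ n₂ l) else 0 := by
  rcases ab with ⟨_ | _, _ | _⟩ <;>
    simp [blockTau, tau11, tau12, tau21, tau22, xv, yv, Fin.sum_univ_add, mul_assoc]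
  rw [Finset.sum_comm]

lemma aeval_blockTau_fBlock : aeval (blockTau n₁ n₂) fBlock = fHerm n₁ n₂ := by
  simp [fBlock, fHerm, blockTau, algebraMap_eq]

lemma pderiv_xv (p : Fin (n₁ + n₂) × Fin (n₁ + n₂)) (k : Fin (n₁ + n₂)) :
    pderiv (Sum.inr (Sum.inl p)) (xv n₁ n₂ k) = 0 := by
  induction k using Fin.addCases <;> simp [xv, uv, vv]

lemma pderiv_yv (p : Fin (n₁ + n₂) × Fin (n₁ + n₂)) (l : Fin (n₁ + n₂)) :
    pderiv (Sum.inr (Sum.inl p)) (yv n₁ n₂ l) = 0 := by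
  induction l using Fin.addCases <;> simp [yv, uv, vv]

lemma pderiv_blockTau (k l : Fin (n₁ + n₂)) (ab : Bool × Bool) :
    pderiv (Sum.inr (Sum.inl (k, l))) (blockTau n₁ n₂ ab) =
      if (blockOf k, blockOf l) = ab then xv n₁ n₂ k * yv n₁ n₂ l else 0 := by
  classical
  simp only [blockTau_eq_sum, map_sum, apply_ite, map_zero, pderiv_mul, pderiv_xv, pderiv_yv,
    tv, pderiv_X, Pi.single_apply, mul_zero, add_zero, ite_mul, one_mul, zero_mul]
  rw [Fintype.sum_eq_single k fun k' hk' => by simp [hk'],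
    Fintype.sum_eq_single l fun l' hl' => by simp [hl']]
  split_ifs <;> simp_all

lemma pderiv_aeval_blockTau (k l : Fin (n₁ + n₂)) (P : MvPolynomial (Bool × Bool) ℚ) :
    pderiv (Sum.inr (Sum.inl (k, l))) (aeval (blockTau n₁ n₂) P) =
      aeval (blockTau n₁ n₂) (pderiv (blockOf k, blockOf l) P) * (xv n₁ n₂ k * yv n₁ n₂ l) := by
  rw [Derivation.map_aeval_mvPolynomial]
  simp [pderiv_blockTau]

lemma pderiv_pderiv_aeval_blockTau (i l k j : Fin (n₁ + n₂))
    (P : MvPolynomial (Bool × Bool) ℚ) :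
    pderiv (Sum.inr (Sum.inl (i, l)))
        (pderiv (Sum.inr (Sum.inl (k, j))) (aeval (blockTau n₁ n₂) P)) =
      aeval (blockTau n₁ n₂) (pderiv (blockOf i, blockOf l) (pderiv (blockOf k, blockOf j) P)) *
        (xv n₁ n₂ i * yv n₁ n₂ l) * (xv n₁ n₂ k * yv n₁ n₂ j) := by
  rw [pderiv_aeval_blockTau, pderiv_mul, pderiv_aeval_blockTau]
  simp [pderiv_xv, pderiv_yv]

lemma sum_tv_mul_blockOf_mul (g : Bool × Bool → MvPolynomial (HVars n₁ n₂) ℚ) :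
    ∑ k : Fin (n₁ + n₂), ∑ l : Fin (n₁ + n₂),
        tv n₁ n₂ k l * g (blockOf k, blockOf l) * (xv n₁ n₂ k * yv n₁ n₂ l) =
      ∑ ab, g ab * blockTau n₁ n₂ ab := by
  symm
  simp only [blockTau_eq_sum, mul_sum, mul_ite, mul_zero]
  rw [Finset.sum_comm]
  refine Finset.sum_congr rfl fun k _ => ?_
  rw [Finset.sum_comm]
  refine Finset.sum_congr rfl fun l _ => ?_
  rw [Finset.sum_ite_eq, if_pos (mem_univ _)]
  ring

lemma sum_tv_mul_pderiv_mul_pderiv (i j : Fin (n₁ + n₂)) (P Q : MvPolynomial (Bool × Bool) ℚ) :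
    ∑ k, ∑ l, tv n₁ n₂ k l * pderiv (Sum.inr (Sum.inl (i, l))) (aeval (blockTau n₁ n₂) P) *
        pderiv (Sum.inr (Sum.inl (k, j))) (aeval (blockTau n₁ n₂) Q) =
      xv n₁ n₂ i * yv n₁ n₂ j * aeval (blockTau n₁ n₂)
        (∑ ab : Bool × Bool, pderiv (blockOf i, ab.2) P * pderiv (ab.1, blockOf j) Q * X ab) := by
  have := sum_tv_mul_blockOf_mul fun ab =>
    aeval (blockTau n₁ n₂) (pderiv (blockOf i, ab.2) P * pderiv (ab.1, blockOf j) Q)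
  simp only [map_sum, map_mul, aeval_X] at this ⊢
  rw [← this, mul_sum]
  refine Finset.sum_congr rfl fun k _ => ?_
  rw [mul_sum]
  refine Finset.sum_congr rfl fun l _ => ?_
  rw [pderiv_aeval_blockTau, pderiv_aeval_blockTau]
  ring

lemma sum_tv_mul_pderiv_pderiv (i j : Fin (n₁ + n₂)) (P : MvPolynomial (Bool × Bool) ℚ) :
    ∑ k, ∑ l, tv n₁ n₂ k l * pderiv (Sum.inr (Sum.inl (i, l)))
        (pderiv (Sum.inr (Sum.inl (k, j))) (aeval (blockTau n₁ n₂) P)) =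
      xv n₁ n₂ i * yv n₁ n₂ j * aeval (blockTau n₁ n₂)
        (∑ ab : Bool × Bool, pderiv (blockOf i, ab.2) (pderiv (ab.1, blockOf j) P) * X ab) := by
  have := sum_tv_mul_blockOf_mul fun ab =>
    aeval (blockTau n₁ n₂) (pderiv (blockOf i, ab.2) (pderiv (ab.1, blockOf j) P))
  simp only [map_sum, map_mul, aeval_X] at this ⊢
  rw [← this, mul_sum]
  refine Finset.sum_congr rfl fun k _ => ?_
  rw [mul_sum]
  refine Finset.sum_congr rfl fun l _ => ?_
  rw [pderiv_pderiv_aeval_blockTau]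
  ring

end Blocks

theorem stmt16_general (n₁ n₂ : ℕ)
    (i j : Fin (n₁ + n₂))
    (hij : (i.val < n₁ ∧ j.val < n₁) ∨ (n₁ ≤ i.val ∧ n₁ ≤ j.val)) :
    kv n₁ n₂ * fHerm n₁ n₂ * pderiv (Sum.inr (Sum.inl (i, j))) (fHerm n₁ n₂) +
      (C (1 / 2 : ℚ) - kv n₁ n₂) *
        ∑ k : Fin (n₁ + n₂), ∑ l : Fin (n₁ + n₂),
          tv n₁ n₂ k l * pderiv (Sum.inr (Sum.inl (i, l))) (fHerm n₁ n₂) *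
            pderiv (Sum.inr (Sum.inl (k, j))) (fHerm n₁ n₂) +
      fHerm n₁ n₂ *
        ∑ k : Fin (n₁ + n₂), ∑ l : Fin (n₁ + n₂),
          tv n₁ n₂ k l *
            pderiv (Sum.inr (Sum.inl (i, l)))
              (pderiv (Sum.inr (Sum.inl (k, j))) (fHerm n₁ n₂)) = 0 := by
  have hblock : blockOf j = blockOf i := by simp only [blockOf, decide_eq_decide]; omega
  rw [← aeval_blockTau_fBlock, sum_tv_mul_pderiv_mul_pderiv, sum_tv_mul_pderiv_pderiv,
    pderiv_aeval_blockTau, hblock, sum_pderiv_fBlock_mul_pderiv_fBlock, sum_pderiv_pderiv_fBlock]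
  simp only [map_mul, map_neg, aeval_C, algebraMap_eq]
  ring

/-- for every pair `(i,j)` in one of the two diagonal blocks determined by
`(n₁,n₂)`, the polynomial identity
`κ·f·∂_{ij}f + (1/2 − κ)·Σ_{k,l} t_{kl}·(∂_{il}f)·(∂_{kj}f) + f·Σ_{k,l} t_{kl}·∂_{il}∂_{kj}f = 0`
holds; equivalently `f^{3/2−κ}` is annihilated by the mixed Laplacian `D_{ij}^{(κ)}`. -/
theorem stmt16 (n₁ n₂ : ℕ) (h21 : n₂ ≤ n₁) (h2 : 1 ≤ n₂)
    (i j : Fin (n₁ + n₂))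
    (hij : (i.val < n₁ ∧ j.val < n₁) ∨ (n₁ ≤ i.val ∧ n₁ ≤ j.val)) :
    kv n₁ n₂ * fHerm n₁ n₂ * pderiv (Sum.inr (Sum.inl (i, j))) (fHerm n₁ n₂) +
      (C (1 / 2 : ℚ) - kv n₁ n₂) *
        ∑ k : Fin (n₁ + n₂), ∑ l : Fin (n₁ + n₂),
          tv n₁ n₂ k l * pderiv (Sum.inr (Sum.inl (i, l))) (fHerm n₁ n₂) *
            pderiv (Sum.inr (Sum.inl (k, j))) (fHerm n₁ n₂) +
      fHerm n₁ n₂ *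
        ∑ k : Fin (n₁ + n₂), ∑ l : Fin (n₁ + n₂),
          tv n₁ n₂ k l *
            pderiv (Sum.inr (Sum.inl (i, l)))
              (pderiv (Sum.inr (Sum.inl (k, j))) (fHerm n₁ n₂)) = 0 :=
  stmt16_general n₁ n₂ i j hij
end
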